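/- arXiv:2402.07484 — 8 statements merged into one kernel-verified Lean document; each statement's English description precedes it below -/
import Mathlib

section
/- Let p > 1 and let (a_n)_{n∈ℕ} be a non-negative sequence with ∑_{n∈ℕ} a_n^p < ∞. Then ∑_{n∈ℕ} a_n^p ≤ (2p²/(p−1)) · ∑_{n∈ℕ} (n+1)² (a_{n+1}^{p−1} − a_n^{p−1})(a_{n+1} − a_n), where the right-hand series has non-negative terms and is interpreted as a value in [0,∞]. -/
open Real Filter
lemma aux1 {q q' t : ℝ} (hq' : 0 < q') (hqq : q' ≤ q) (ht0 : 0 ≤ t) (ht1 : t ≤ 1) :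
    q' * (1 - t ^ q) ≤ q * (1 - t ^ q') := by
  have hs0 : 0 ≤ t ^ q' := Real.rpow_nonneg ht0 _
  have hs1 : t ^ q' ≤ 1 := Real.rpow_le_one ht0 ht1 hq'.le
  have hr : 1 ≤ q / q' := (one_le_div hq').2 hqq
  have hb := one_add_mul_self_le_rpow_one_add (s := t ^ q' - 1) (by linarith) hr
  have he : (1 + (t ^ q' - 1)) ^ (q / q') = t ^ q := by
    rw [show 1 + (t ^ q' - 1) = t ^ q' by ring, ← Real.rpow_mul ht0,
      mul_div_cancel₀ _ hq'.ne']
  rw [he] at hb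
  have h2 : 1 - (q / q') * (1 - t ^ q') ≤ t ^ q := by linarith [hb]
  have := mul_le_mul_of_nonneg_left h2 hq'.le
  have h3 : q' * ((q / q') * (1 - t ^ q')) = q * (1 - t ^ q') := by
    field_simp
  nlinarith [this, h3]

lemma auxP {p : ℝ} (hp : 1 < p) {x y : ℝ} (hy : 0 ≤ y) (hxy : y ≤ x) :
    (x ^ (p/2) - y ^ (p/2)) ^ 2 ≤
      p ^ 2 / (2 * (p - 1)) * ((x ^ (p-1) - y ^ (p-1)) * (x - y)) := by
  have hx : 0 ≤ x := hy.trans hxy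
  have hp1 : (0:ℝ) < p - 1 := by linarith
  rcases eq_or_lt_of_le hx with hx0 | hx0
  · -- x = 0, hence y = 0
    have hy0 : y = 0 := le_antisymm (by linarith) hy
    rw [← hx0, hy0, Real.zero_rpow (by positivity : p/2 ≠ 0),
      Real.zero_rpow (by positivity : p - 1 ≠ 0)]
    norm_num
  -- x > 0
  set t : ℝ := y / x with htdef
  have ht0 : 0 ≤ t := div_nonneg hy hx0.le
  have ht1 : t ≤ 1 := (div_le_one hx0).2 hxy
  have hyx : y = x * t := by rw [htdef]; field_simp
  -- key scaled claim
  have key : 2 * (p - 1) * (1 - t ^ (p/2)) ^ 2 ≤ p ^ 2 * ((1 - t ^ (p-1)) * (1 - t)) := by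
    have hA0 : 0 ≤ 1 - t ^ (p/2) := by
      have := Real.rpow_le_one ht0 ht1 (by linarith : (0:ℝ) ≤ p/2)
      linarith
    have hB1 : 0 ≤ 1 - t ^ (p-1) := by
      have := Real.rpow_le_one ht0 ht1 hp1.le
      linarith
    have hB2 : 0 ≤ 1 - t := by linarith
    rcases eq_or_lt_of_le ht0 with ht00 | ht00
    · rw [← ht00, Real.zero_rpow (by positivity : p/2 ≠ 0),
        Real.zero_rpow (by positivity : p - 1 ≠ 0)]
      nlinarith [sq_nonneg (p - 1)]
    rcases le_total p 2 with hp2 | hp2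
    · -- 1 < p ≤ 2 : A ≤ B2 and (p-1) A ≤ (p/2) B1
      have h1 : 1 - t ^ (p/2) ≤ 1 - t := by
        have := Real.rpow_le_rpow_of_exponent_ge ht00 ht1 (by linarith : p/2 ≤ 1)
        rw [Real.rpow_one] at this
        linarith
      have h2 : (p - 1) * (1 - t ^ (p/2)) ≤ (p/2) * (1 - t ^ (p-1)) :=
        aux1 hp1 (by linarith) ht0 ht1
      nlinarith [mul_le_mul h2 h1 hA0 (by positivity : (0:ℝ) ≤ (p/2) * (1 - t ^ (p-1))),
        mul_nonneg hB1 hB2,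
        mul_nonneg (by linarith : (0:ℝ) ≤ p) (mul_nonneg (mul_nonneg hp1.le hB1) hB2)]
    · -- p ≥ 2 : A ≤ B1 and A ≤ (p/2) B2
      have h1 : 1 - t ^ (p/2) ≤ 1 - t ^ (p-1) := by
        have := Real.rpow_le_rpow_of_exponent_ge ht00 ht1 (by linarith : p/2 ≤ p - 1)
        linarith
      have h2 : 1 * (1 - t ^ (p/2)) ≤ (p/2) * (1 - t ^ (1:ℝ)) :=
        aux1 one_pos (by linarith) ht0 ht1
      rw [Real.rpow_one] at h2
      nlinarith [mul_le_mul h1 h2 (by linarith) hB1, mul_nonneg hB1 hB2,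
        mul_nonneg (by linarith : (0:ℝ) ≤ p) (mul_nonneg hB1 hB2)]
  -- unscale
  have hxp : (0:ℝ) < x ^ p := Real.rpow_pos_of_pos hx0 _
  have e1 : x ^ (p/2) - y ^ (p/2) = x ^ (p/2) * (1 - t ^ (p/2)) := by
    rw [hyx, Real.mul_rpow hx ht0]; ring
  have e2 : x ^ (p-1) - y ^ (p-1) = x ^ (p-1) * (1 - t ^ (p-1)) := by
    rw [hyx, Real.mul_rpow hx ht0]; ring
  have e3 : x - y = x * (1 - t) := by rw [hyx]; ring
  have e4 : (x ^ (p/2)) ^ 2 = x ^ p := by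
    rw [← Real.rpow_natCast (x ^ (p/2)) 2, ← Real.rpow_mul hx]
    norm_num
  have e5 : x ^ (p-1) * x = x ^ p := by
    nth_rewrite 2 [← Real.rpow_one x]
    rw [← Real.rpow_add hx0]; ring_nf
  rw [e1, e2, e3, mul_pow, e4]
  have := mul_le_mul_of_nonneg_left key hxp.le
  calc x ^ p * (1 - t ^ (p/2)) ^ 2
      ≤ x ^ p * (p ^ 2 * ((1 - t ^ (p-1)) * (1 - t))) / (2 * (p-1)) := by
        rw [le_div_iff₀ (by linarith)]; nlinarith [this]
    _ = p ^ 2 / (2 * (p - 1)) * (x ^ (p-1) * (1 - t ^ (p-1)) * (x * (1 - t))) := by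
        rw [show x ^ (p-1) * (1 - t ^ (p-1)) * (x * (1 - t))
            = (x ^ (p-1) * x) * ((1 - t ^ (p-1)) * (1 - t)) by ring, e5]
        field_simp

lemma auxinv {x : ℝ} (hx : 0 < x) : (1/(x+1))^2 ≤ 1/x - 1/(x+1) := by
  have hx1 : (0:ℝ) < x + 1 := by linarith
  rw [div_pow, one_pow, div_sub_div _ _ hx.ne' hx1.ne',
    div_le_div_iff₀ (by positivity) (by positivity)]
  nlinarith

set_option maxHeartbeats 1000000 in
lemma auxHardy (b : ℕ → ℝ) (hb0 : ∀ n, 0 ≤ b n) (hb2 : Summable fun n => b n ^ 2)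
    (hd : Summable fun n : ℕ => ((n:ℝ)+1)^2 * (b (n+1) - b n)^2) :
    ∑' n, b n ^ 2 ≤ 4 * ∑' n : ℕ, ((n:ℝ)+1)^2 * (b (n+1) - b n)^2 := by
  set d : ℕ → ℝ := fun n => |b (n+1) - b n| with hddef
  have hd0 : ∀ n, 0 ≤ d n := fun n => abs_nonneg _
  set w : ℕ → ℝ := fun n => ((n:ℝ)+1) * d n with hwdef
  have hw0 : ∀ n, 0 ≤ w n := fun n => mul_nonneg (by positivity) (hd0 n)
  have hwsq : ∀ n, w n ^ 2 = ((n:ℝ)+1)^2 * (b (n+1) - b n)^2 := by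
    intro n; simp [hwdef, hddef, mul_pow, sq_abs]
  have hw2 : Summable fun n => w n ^ 2 := by
    simpa only [hwsq] using hd
  -- summability of d
  have hinv : Summable fun n : ℕ => (1:ℝ) / ((n:ℝ)+1)^2 := by
    have h := Real.summable_one_div_nat_pow.2 (le_refl 2)
    have h2 := (summable_nat_add_iff 1).2 h
    refine h2.congr fun n => ?_
    push_cast
    ring
  have hdsum : Summable d := by
    refine Summable.of_nonneg_of_le hd0 (fun n => ?_) ((hw2.add hinv).div_const 2)
    have h1 : d n = w n * (1/((n:ℝ)+1)) := by
      rw [hwdef]; field_simp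
    have e : (1/((n:ℝ)+1))^2 = 1/((n:ℝ)+1)^2 := by
      rw [div_pow]; norm_num
    rw [h1, ← e]
    nlinarith [sq_nonneg (w n - 1/((n:ℝ)+1))]
  -- tail sums
  set T : ℕ → ℝ := fun n => ∑' k, d (k + n) with hTdef
  have hTsum : ∀ n, Summable fun k => d (k + n) := fun n => (summable_nat_add_iff n).2 hdsum
  have hT0 : ∀ n, 0 ≤ T n := fun n => tsum_nonneg fun k => hd0 _
  have hTrec : ∀ n, T n = d n + T (n+1) := by
    intro n
    simp only [hTdef]
    rw [Summable.tsum_eq_zero_add (hTsum n)]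
    congr 1
    · simp
    · exact tsum_congr fun k => congrArg d (by omega)
  have hTmono : ∀ n, T (n+1) ≤ T n := fun n => by
    have := hTrec n; linarith [hd0 n]
  -- b n ≤ T n
  have hb_tend : Tendsto b atTop (nhds 0) := by
    have h2 := hb2.tendsto_atTop_zero
    have h3 : Tendsto (fun n => Real.sqrt (b n ^ 2)) atTop (nhds (Real.sqrt 0)) :=
      (Real.continuous_sqrt.tendsto 0).comp h2
    rw [Real.sqrt_zero] at h3
    exact h3.congr fun n => Real.sqrt_sq (hb0 n)
  have hbT : ∀ n, b n ≤ T n := by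
    intro n
    have hstep : ∀ m, b n ≤ b (n + m) + ∑ k ∈ Finset.range m, d (n + k) := by
      intro m
      induction m with
      | zero => simp
      | succ m ih =>
        have habs : b (n + m) - b (n + m + 1) ≤ d (n + m) := by
          rw [hddef]
          exact (neg_le_abs _).trans_eq' (by ring)
        have e : n + (m+1) = n + m + 1 := rfl
        rw [Finset.sum_range_succ, e]
        linarith
    have hsumle : ∀ m, ∑ k ∈ Finset.range m, d (n + k) ≤ T n := by
      intro m
      have h1 : ∑ k ∈ Finset.range m, d (n + k) = ∑ k ∈ Finset.range m, d (k + n) :=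
        Finset.sum_congr rfl fun k _ => congrArg d (by omega)
      rw [h1]
      exact Summable.sum_le_tsum (Finset.range m) (fun k _ => hd0 _) (hTsum n)
    have hlim : Tendsto (fun m => b (n + m) + T n) atTop (nhds (0 + T n)) :=
      (((hb_tend.comp (tendsto_add_atTop_nat n)).congr
        (fun m => congrArg b (Nat.add_comm m n))).add tendsto_const_nhds)
    rw [zero_add] at hlim
    exact ge_of_tendsto' hlim fun m => le_trans (hstep m) (by linarith [hsumle m])
  -- tail of w^2
  set E : ℕ → ℝ := fun n => ∑' k, w (k + n) ^ 2 with hEdef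
  have hEsum : ∀ n, Summable fun k => w (k + n) ^ 2 := fun n => (summable_nat_add_iff n).2 hw2
  have hE0 : ∀ n, 0 ≤ E n := fun n => tsum_nonneg fun k => sq_nonneg _
  have hE_tend : Tendsto E atTop (nhds 0) := tendsto_sum_nat_add (fun n => w n ^ 2)
  -- N * T N ^ 2 ≤ E N for N ≥ 1
  have hNT : ∀ N : ℕ, 1 ≤ N → (N:ℝ) * T N ^ 2 ≤ E N := by
    intro N hN
    have hNpos : (0:ℝ) < N := by exact_mod_cast hN
    have hinvsum : ∀ m, ∑ k ∈ Finset.range m, (1/((N:ℝ)+k+1))^2 ≤ 1/(N:ℝ) := by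
      intro m
      have hle : ∀ k ∈ Finset.range m, (1/((N:ℝ)+k+1))^2 ≤
          (1:ℝ)/((N:ℝ)+k) - 1/((N:ℝ)+k+1) := by
        intro k _
        exact auxinv (by positivity)
      have htel := Finset.sum_range_sub' (fun k : ℕ => (1:ℝ)/((N:ℝ)+k)) m
      calc ∑ k ∈ Finset.range m, (1/((N:ℝ)+k+1))^2
          ≤ ∑ k ∈ Finset.range m, ((1:ℝ)/((N:ℝ)+k) - 1/((N:ℝ)+k+1)) :=
            Finset.sum_le_sum hle
        _ = ∑ k ∈ Finset.range m,
            ((1:ℝ)/((N:ℝ)+(k:ℕ)) - 1/((N:ℝ)+((k+1:ℕ):ℝ))) :=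
            Finset.sum_congr rfl fun k _ => by push_cast; ring
        _ = 1/((N:ℝ)+((0:ℕ):ℝ)) - 1/((N:ℝ)+(m:ℝ)) := htel
        _ ≤ 1/(N:ℝ) := by
            have h3 : (0:ℝ) < (N:ℝ)+m := by positivity
            have h4 := le_of_lt (div_pos one_pos h3)
            push_cast
            rw [add_zero]
            linarith
    have hTbound : T N ≤ Real.sqrt (E N * (1/(N:ℝ))) := by
      apply Summable.tsum_le_of_sum_le (hTsum N)
      intro s
      have hsub : s ⊆ Finset.range (s.sup id + 1) := fun i hi =>
        Finset.mem_range.2 (Nat.lt_succ_of_le (Finset.le_sup (f := id) hi))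
      set m := s.sup id + 1 with hm
      have h1 : ∑ k ∈ s, d (k + N) ≤ ∑ k ∈ Finset.range m, d (k + N) :=
        Finset.sum_le_sum_of_subset_of_nonneg hsub (fun i _ _ => hd0 _)
      have heq : ∀ k : ℕ, w (k + N) * (1/((N:ℝ)+k+1)) = d (k + N) := by
        intro k
        have hpos : ((N:ℝ)+k+1) ≠ 0 := by positivity
        simp only [hwdef]
        push_cast
        field_simp
        ring
      have h2 : (∑ k ∈ Finset.range m, d (k + N))^2 ≤
          (∑ k ∈ Finset.range m, w (k+N)^2) * ∑ k ∈ Finset.range m, (1/((N:ℝ)+k+1))^2 := by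
        calc (∑ k ∈ Finset.range m, d (k + N))^2
            = (∑ k ∈ Finset.range m, w (k+N) * (1/((N:ℝ)+k+1)))^2 := by
              congr 1; exact Finset.sum_congr rfl fun k _ => (heq k).symm
          _ ≤ _ := Finset.sum_mul_sq_le_sq_mul_sq (Finset.range m) _ _
      have h3 : (∑ k ∈ Finset.range m, w (k+N)^2) ≤ E N :=
        Summable.sum_le_tsum (Finset.range m) (fun k _ => sq_nonneg _) (hEsum N)
      have h5 : (∑ k ∈ Finset.range m, d (k + N))^2 ≤ E N * (1/(N:ℝ)) :=
        h2.trans (mul_le_mul h3 (hinvsum m)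
          (Finset.sum_nonneg fun k _ => sq_nonneg _) (hE0 N))
      have h6 : ∑ k ∈ Finset.range m, d (k + N) ≤ Real.sqrt (E N * (1/(N:ℝ))) := by
        have := Real.sqrt_le_sqrt h5
        rwa [Real.sqrt_sq (Finset.sum_nonneg fun k _ => hd0 _)] at this
      linarith
    have hsq : T N ^ 2 ≤ E N * (1/(N:ℝ)) := by
      have h7 := pow_le_pow_left₀ (hT0 N) hTbound 2
      rwa [Real.sq_sqrt (mul_nonneg (hE0 N) (by positivity))] at h7
    calc (N:ℝ) * T N ^ 2 ≤ (N:ℝ) * (E N * (1/(N:ℝ))) :=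
          mul_le_mul_of_nonneg_left hsq hNpos.le
      _ = E N := by field_simp
  -- Abel summation identity
  have hAbel : ∀ N : ℕ, ∑ n ∈ Finset.range N, T n ^ 2 =
      (∑ n ∈ Finset.range N, ((n:ℝ)+1) * (T n ^ 2 - T (n+1) ^ 2)) + (N:ℝ) * T N ^ 2 := by
    intro N
    induction N with
    | zero => simp
    | succ N ih =>
      rw [Finset.sum_range_succ, Finset.sum_range_succ, ih]
      push_cast
      ring
  -- main estimate
  set S : ℝ := ∑' n, w n ^ 2 with hSdef
  have hS0 : 0 ≤ S := tsum_nonneg fun n => sq_nonneg _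
  have key : ∀ N : ℕ, ∑ n ∈ Finset.range N, b n ^ 2 ≤
      (Real.sqrt S + Real.sqrt (S + (N:ℝ) * T N ^ 2))^2 := by
    intro N
    set A : ℝ := ∑ n ∈ Finset.range N, T n ^ 2 with hA
    have hA0 : 0 ≤ A := Finset.sum_nonneg fun n _ => sq_nonneg _
    have hstep : ∀ n : ℕ, ((n:ℝ)+1) * (T n ^ 2 - T (n+1) ^ 2) ≤ 2 * (w n * T n) := by
      intro n
      have h1 : T n ^ 2 - T (n+1)^2 = d n * (T n + T (n+1)) := by
        have h := hTrec n
        rw [h]; ring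
      rw [h1]; simp only [hwdef]
      have := hTmono n
      nlinarith [mul_nonneg (mul_nonneg
        (by positivity : (0:ℝ) ≤ (n:ℝ)+1) (hd0 n)) (sub_nonneg.2 (hTmono n))]
    have hCS : (∑ n ∈ Finset.range N, w n * T n)^2 ≤ S * A := by
      calc (∑ n ∈ Finset.range N, w n * T n)^2
          ≤ (∑ n ∈ Finset.range N, w n ^2) * ∑ n ∈ Finset.range N, T n ^2 :=
            Finset.sum_mul_sq_le_sq_mul_sq _ _ _
        _ ≤ S * A := by
            apply mul_le_mul_of_nonneg_right _ hA0
            exact Summable.sum_le_tsum _ (fun n _ => sq_nonneg _) hw2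
    have hwT0 : 0 ≤ ∑ n ∈ Finset.range N, w n * T n :=
      Finset.sum_nonneg fun n _ => mul_nonneg (hw0 n) (hT0 n)
    have hCS' : ∑ n ∈ Finset.range N, w n * T n ≤ Real.sqrt S * Real.sqrt A := by
      have := Real.sqrt_le_sqrt hCS
      rwa [Real.sqrt_sq hwT0, Real.sqrt_mul hS0] at this
    have hmain : A ≤ 2 * (Real.sqrt S * Real.sqrt A) + (N:ℝ) * T N ^ 2 := by
      have h1 := hAbel N
      have h2 : ∑ n ∈ Finset.range N, ((n:ℝ)+1) * (T n ^ 2 - T (n+1) ^ 2) ≤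
          2 * ∑ n ∈ Finset.range N, w n * T n := by
        rw [Finset.mul_sum]
        exact Finset.sum_le_sum fun n _ => hstep n
      have := h1
      nlinarith [hCS', h2]
    -- solve quadratic
    have hsolve : A ≤ (Real.sqrt S + Real.sqrt (S + (N:ℝ) * T N ^ 2))^2 := by
      have hε0 : 0 ≤ (N:ℝ) * T N ^ 2 := by positivity
      have h1 : (Real.sqrt A - Real.sqrt S)^2 ≤ S + (N:ℝ) * T N ^ 2 := by
        have hsA : Real.sqrt A ^ 2 = A := Real.sq_sqrt hA0
        have hsS : Real.sqrt S ^ 2 = S := Real.sq_sqrt hS0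
        nlinarith [hmain, hsA, hsS]
      have h2 : Real.sqrt A - Real.sqrt S ≤ Real.sqrt (S + (N:ℝ) * T N ^ 2) := by
        have := Real.sqrt_le_sqrt h1
        rw [Real.sqrt_sq_eq_abs] at this
        exact (le_abs_self _).trans this
      have h3 : Real.sqrt A ≤ Real.sqrt S + Real.sqrt (S + (N:ℝ) * T N ^ 2) := by linarith
      have h4 := pow_le_pow_left₀ (Real.sqrt_nonneg A) h3 2
      rwa [Real.sq_sqrt hA0] at h4
    refine le_trans ?_ hsolve
    exact Finset.sum_le_sum fun n _ => pow_le_pow_left₀ (hb0 n) (hbT n) 2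
  -- pass to the limit
  have hεtend : Tendsto (fun N : ℕ => (N:ℝ) * T N ^ 2) atTop (nhds 0) := by
    have hle : ∀ᶠ (N : ℕ) in atTop, (N:ℝ) * T N ^ 2 ≤ E N := by
      filter_upwards [eventually_ge_atTop 1] with N hN using hNT N hN
    have hge : ∀ᶠ (N : ℕ) in atTop, (0:ℝ) ≤ (N:ℝ) * T N ^ 2 := by
      filter_upwards with N using by positivity
    exact tendsto_of_tendsto_of_tendsto_of_le_of_le' tendsto_const_nhds hE_tend hge hle
  have hrhs_tend : Tendsto
      (fun N : ℕ => (Real.sqrt S + Real.sqrt (S + (N:ℝ) * T N ^ 2))^2) atTop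
      (nhds ((Real.sqrt S + Real.sqrt (S + 0))^2)) := by
    apply Tendsto.pow
    apply Tendsto.add tendsto_const_nhds
    exact (Real.continuous_sqrt.tendsto _).comp (tendsto_const_nhds.add hεtend)
  have hlhs_tend : Tendsto (fun N => ∑ n ∈ Finset.range N, b n ^ 2) atTop
      (nhds (∑' n, b n ^ 2)) := hb2.hasSum.tendsto_sum_nat
  have hfinal := le_of_tendsto_of_tendsto' hlhs_tend hrhs_tend key
  have heval : (Real.sqrt S + Real.sqrt (S + 0))^2 = 4 * S := by
    rw [add_zero]
    have := Real.sq_sqrt hS0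
    nlinarith [this]
  rw [heval] at hfinal
  have hSeq : S = ∑' n : ℕ, ((n:ℝ)+1)^2 * (b (n+1) - b n)^2 := by
    rw [hSdef]
    exact tsum_congr hwsq
  rw [← hSeq]
  exact hfinal
/-- **Discrete Poincaré-type inequality** (Lemma on sequence sums).
If `p > 1` and `(a n)` is a non-negative sequence with `∑ n, a n ^ p < ∞`, then
`∑ n, a n ^ p ≤ (2 p² / (p - 1)) · ∑ n, (n+1)² (a (n+1) ^ (p-1) - a n ^ (p-1)) (a (n+1) - a n)`,
the right-hand series (of non-negative terms) being interpreted in `[0,∞]`. -/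
theorem stmt0 (p : ℝ) (hp : 1 < p) (a : ℕ → ℝ) (ha : ∀ n, 0 ≤ a n)
    (hsum : Summable fun n => a n ^ p) :
    ENNReal.ofReal (∑' n, a n ^ p) ≤
      ENNReal.ofReal (2 * p ^ 2 / (p - 1)) *
        ∑' n : ℕ, ENNReal.ofReal
          (((n : ℝ) + 1) ^ 2 *
            ((a (n + 1) ^ (p - 1) - a n ^ (p - 1)) * (a (n + 1) - a n))) := by
  have hp1 : (0:ℝ) < p - 1 := by linarith
  have hc : (0:ℝ) < 2 * p ^ 2 / (p - 1) := by positivity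
  set g : ℕ → ℝ := fun n => ((n:ℝ)+1)^2 *
    ((a (n + 1) ^ (p - 1) - a n ^ (p - 1)) * (a (n + 1) - a n)) with hgdef
  have hg0 : ∀ n, 0 ≤ g n := by
    intro n
    apply mul_nonneg (by positivity)
    rcases le_total (a n) (a (n+1)) with h | h
    · exact mul_nonneg (sub_nonneg.2 (Real.rpow_le_rpow (ha n) h hp1.le))
        (sub_nonneg.2 h)
    · nlinarith [sub_nonpos.2 (Real.rpow_le_rpow (ha (n+1)) h hp1.le),
        sub_nonpos.2 h]
  by_cases hR : ∑' n, ENNReal.ofReal (g n) = ⊤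
  · rw [hR, ENNReal.mul_top (by simpa [ENNReal.ofReal_eq_zero] using hc.not_ge)]
    exact le_top
  -- finite case : g is summable
  have hgsum : Summable g := by
    have h1 : Summable fun n => (g n).toNNReal := by
      rw [← ENNReal.tsum_coe_ne_top_iff_summable]
      convert hR using 2 with n
      rfl
    have h2 := NNReal.summable_coe.2 h1
    refine h2.congr fun n => ?_
    simp [Real.coe_toNNReal _ (hg0 n)]
  -- real-side inequality
  set b : ℕ → ℝ := fun n => a n ^ (p/2) with hbdef
  have hb0 : ∀ n, 0 ≤ b n := fun n => Real.rpow_nonneg (ha n) _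
  have hbsq : ∀ n, b n ^ 2 = a n ^ p := by
    intro n
    rw [hbdef]
    rw [← Real.rpow_natCast (a n ^ (p/2)) 2, ← Real.rpow_mul (ha n)]
    norm_num
  have hb2 : Summable fun n => b n ^ 2 := by
    refine hsum.congr fun n => (hbsq n).symm
  have hptw : ∀ n : ℕ, ((n:ℝ)+1)^2 * (b (n+1) - b n)^2 ≤ p^2/(2*(p-1)) * g n := by
    intro n
    have hX : (0:ℝ) ≤ ((n:ℝ)+1)^2 := by positivity
    rcases le_total (a n) (a (n+1)) with h | h
    · have hP := auxP hp (ha n) h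
      have := mul_le_mul_of_nonneg_left hP hX
      simp only [hbdef, hgdef]
      nlinarith [this]
    · have hP := auxP hp (ha (n+1)) h
      have := mul_le_mul_of_nonneg_left hP hX
      simp only [hbdef, hgdef]
      nlinarith [this]
  have hdsumm : Summable fun n : ℕ => ((n:ℝ)+1)^2 * (b (n+1) - b n)^2 := by
    refine Summable.of_nonneg_of_le (fun n => by positivity) hptw (hgsum.mul_left _)
  have hhardy := auxHardy b hb0 hb2 hdsumm
  have hmid : ∑' n : ℕ, ((n:ℝ)+1)^2 * (b (n+1) - b n)^2 ≤ p^2/(2*(p-1)) * ∑' n, g n := by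
    calc ∑' n : ℕ, ((n:ℝ)+1)^2 * (b (n+1) - b n)^2
        ≤ ∑' n, p^2/(2*(p-1)) * g n := Summable.tsum_le_tsum hptw hdsumm (hgsum.mul_left _)
      _ = p^2/(2*(p-1)) * ∑' n, g n := tsum_mul_left
  have hreal : ∑' n, a n ^ p ≤ (2 * p ^ 2 / (p - 1)) * ∑' n, g n := by
    have h1 : ∑' n, a n ^ p = ∑' n, b n ^ 2 := tsum_congr fun n => (hbsq n).symm
    have h2 : 4 * (p^2/(2*(p-1)) * ∑' n, g n) = (2 * p ^ 2 / (p - 1)) * ∑' n, g n := by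
      field_simp
      ring
    rw [h1]
    calc ∑' n, b n ^ 2 ≤ 4 * ∑' n : ℕ, ((n:ℝ)+1)^2 * (b (n+1) - b n)^2 := hhardy
      _ ≤ 4 * (p^2/(2*(p-1)) * ∑' n, g n) := by linarith [hmid]
      _ = _ := h2
  -- transfer to ENNReal
  have hofg : ∑' n, ENNReal.ofReal (g n) = ENNReal.ofReal (∑' n, g n) :=
    (ENNReal.ofReal_tsum_of_nonneg hg0 hgsum).symm
  calc ENNReal.ofReal (∑' n, a n ^ p)
      ≤ ENNReal.ofReal ((2 * p ^ 2 / (p - 1)) * ∑' n, g n) :=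
        ENNReal.ofReal_le_ofReal hreal
    _ = ENNReal.ofReal (2 * p ^ 2 / (p - 1)) * ENNReal.ofReal (∑' n, g n) :=
        ENNReal.ofReal_mul hc.le
    _ = _ := by rw [← hofg]
end

section
/- Let (a_n)_{n∈ℕ} be a real-valued sequence (not necessarily non-negative) with ∑_{n∈ℕ} a_n² < ∞. Then ∑_{n∈ℕ} a_n² ≤ 8 · ∑_{n∈ℕ} (n+1)² (a_{n+1} − a_n)², where the right-hand series is interpreted as a value in [0,∞]. -/
/-!
Summation by parts gives, for every `N`,
`∑_{n<N} a_n² = N a_N² - ∑_{n<N} (n+1)(a_{n+1} - a_n)(a_{n+1} + a_n)`.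
Since `∑ 1/n` diverges while `∑ a_n²` converges, `N a_N²` is arbitrarily small for
arbitrarily large `N`, and Cauchy–Schwarz bounds the last sum by `√(T · 4S)`, where
`S = ∑ a_n²` and `T = ∑ (n+1)²(a_{n+1} - a_n)²`. Hence `S ≤ 2√(TS)`, i.e. `S ≤ 4T`.
-/

open Finset Filter

lemma frequently_natCast_mul_lt_of_summable {f : ℕ → ℝ} (hf : Summable f) {ε : ℝ}
    (hε : 0 < ε) : ∃ᶠ n : ℕ in atTop, (n : ℝ) * f n < ε := by
  by_contra h
  rw [not_frequently] at h
  have hinv : Summable fun n : ℕ => ε * (n : ℝ)⁻¹ := by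
    refine hf.of_norm_bounded_eventually ?_
    rw [Nat.cofinite_eq_atTop]
    filter_upwards [h, eventually_gt_atTop 0] with n hn hn0
    have hn0' : (0 : ℝ) < n := by exact_mod_cast hn0
    rw [Real.norm_of_nonneg (by positivity), ← div_eq_mul_inv, div_le_iff₀ hn0']
    linarith
  exact Real.not_summable_natCast_inv ((summable_mul_left_iff hε.ne').1 hinv)

lemma sum_range_sq_add_sum_range_mul_eq (a : ℕ → ℝ) (N : ℕ) :
    ∑ n ∈ range N, a n ^ 2 +
        ∑ n ∈ range N, ((n : ℝ) + 1) * (a (n + 1) - a n) * (a (n + 1) + a n) =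
      N * a N ^ 2 := by
  induction N with
  | zero => simp
  | succ N ih =>
    rw [sum_range_succ, sum_range_succ, ← sub_eq_zero, ← sub_eq_zero.2 ih]
    push_cast
    ring

lemma sum_range_sq_succ_add_le_four_mul_tsum (a : ℕ → ℝ) (hsum : Summable fun n => a n ^ 2)
    (N : ℕ) :
    ∑ n ∈ range N, (a (n + 1) + a n) ^ 2 ≤ 4 * ∑' n, a n ^ 2 := by
  have hle : ∀ M, ∑ n ∈ range M, a n ^ 2 ≤ ∑' n, a n ^ 2 :=
    fun M => hsum.sum_le_tsum _ fun n _ => sq_nonneg _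
  have hshift : ∑ n ∈ range N, a (n + 1) ^ 2 ≤ ∑' n, a n ^ 2 := by
    have := hle (N + 1)
    rw [sum_range_succ'] at this
    linarith [sq_nonneg (a 0)]
  calc ∑ n ∈ range N, (a (n + 1) + a n) ^ 2
      ≤ ∑ n ∈ range N, (2 * a (n + 1) ^ 2 + 2 * a n ^ 2) :=
        sum_le_sum fun n _ => by nlinarith [sq_nonneg (a (n + 1) - a n)]
    _ ≤ 4 * ∑' n, a n ^ 2 := by
        rw [sum_add_distrib, ← mul_sum, ← mul_sum]
        linarith [hle N]

theorem tsum_sq_le_four_mul_tsum (a : ℕ → ℝ) (hsum : Summable fun n => a n ^ 2)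
    (hT : Summable fun n : ℕ => ((n : ℝ) + 1) ^ 2 * (a (n + 1) - a n) ^ 2) :
    ∑' n, a n ^ 2 ≤ 4 * ∑' n : ℕ, ((n : ℝ) + 1) ^ 2 * (a (n + 1) - a n) ^ 2 := by
  set S := ∑' n, a n ^ 2
  set T := ∑' n : ℕ, ((n : ℝ) + 1) ^ 2 * (a (n + 1) - a n) ^ 2
  have hS : 0 ≤ S := tsum_nonneg fun n => sq_nonneg _
  have hT0 : 0 ≤ T := tsum_nonneg fun n => by positivity
  have hpartial : ∀ N : ℕ, ∑ n ∈ range N, a n ^ 2 ≤ N * a N ^ 2 + √(T * (4 * S)) := by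
    intro N
    have hcs := sum_mul_sq_le_sq_mul_sq (range N)
      (fun n => ((n : ℝ) + 1) * (a (n + 1) - a n)) (fun n => a (n + 1) + a n)
    have hdiff : ∑ n ∈ range N, (((n : ℝ) + 1) * (a (n + 1) - a n)) ^ 2 ≤ T := by
      simp_rw [mul_pow]
      exact hT.sum_le_tsum _ fun n _ => by positivity
    have hbound := Real.abs_le_sqrt <| hcs.trans <|
      mul_le_mul hdiff (sum_range_sq_succ_add_le_four_mul_tsum a hsum N)
        (sum_nonneg fun n _ => sq_nonneg _) hT0
    linarith [sum_range_sq_add_sum_range_mul_eq a N, neg_abs_le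
      (∑ n ∈ range N, ((n : ℝ) + 1) * (a (n + 1) - a n) * (a (n + 1) + a n))]
  have hS_le : S ≤ √(T * (4 * S)) := by
    refine le_of_forall_pos_lt_add fun ε hε => ?_
    have hsmall := frequently_natCast_mul_lt_of_summable hsum (half_pos hε)
    have hclose := hsum.tendsto_sum_tsum_nat.eventually_const_lt (sub_lt_self S (half_pos hε))
    obtain ⟨N, hNa, hNS⟩ := (hsmall.and_eventually hclose).exists
    linarith [hpartial N]
  have hsq := (Real.le_sqrt hS (by positivity)).1 hS_le
  nlinarith

/-- Case `p = 2` of the discrete Poincaré-type inequality: for a real (not necessarily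
non-negative) sequence `(a n)` with `∑ n, a n ^ 2 < ∞`,
`∑ n, a n ^ 2 ≤ 8 · ∑ n, (n+1)² (a (n+1) - a n)²`, the right-hand series being
interpreted in `[0,∞]`. -/
theorem stmt1 (a : ℕ → ℝ) (hsum : Summable fun n => a n ^ 2) :
    ENNReal.ofReal (∑' n, a n ^ 2) ≤
      8 * ∑' n : ℕ, ENNReal.ofReal (((n : ℝ) + 1) ^ 2 * (a (n + 1) - a n) ^ 2) := by
  set R := ∑' n : ℕ, ENNReal.ofReal (((n : ℝ) + 1) ^ 2 * (a (n + 1) - a n) ^ 2)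
  by_cases hR : R = ⊤
  · simp [hR]
  have hT : Summable fun n : ℕ => ((n : ℝ) + 1) ^ 2 * (a (n + 1) - a n) ^ 2 :=
    (ENNReal.summable_toReal hR).congr fun n => ENNReal.toReal_ofReal (by positivity)
  have hRT : R = ENNReal.ofReal (∑' n : ℕ, ((n : ℝ) + 1) ^ 2 * (a (n + 1) - a n) ^ 2) :=
    (ENNReal.ofReal_tsum_of_nonneg (fun n => by positivity) hT).symm
  rw [hRT, ← ENNReal.ofReal_ofNat, ← ENNReal.ofReal_mul (by norm_num)]
  refine ENNReal.ofReal_le_ofReal ((tsum_sq_le_four_mul_tsum a hsum hT).trans ?_)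
  have : 0 ≤ ∑' n : ℕ, ((n : ℝ) + 1) ^ 2 * (a (n + 1) - a n) ^ 2 :=
    tsum_nonneg fun n => by positivity
  linarith
end

section
/- Let p > 1 and a, b ≥ 0 be real numbers. Then |a^p − b^p| ≤ (p/√(p−1)) · √(a^p + b^p) · √((a^{p−1} − b^{p−1})(a − b)). -/
open Real

lemma aux_rpow_sub_rpow_le (p : ℝ) (hp : 1 ≤ p) {x y : ℝ} (hy : 0 ≤ y) (hxy : y ≤ x) :
    x ^ p - y ^ p ≤ p * x ^ (p - 1) * (x - y) := by
  have hx : 0 ≤ x := hy.trans hxy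
  rcases eq_or_lt_of_le hx with h0 | h0
  · have hy0 : y = 0 := le_antisymm (hxy.trans_eq h0.symm) hy
    subst hy0
    rw [← h0]
    simp [Real.zero_rpow (by linarith : p ≠ 0)]
  · have hs : (-1 : ℝ) ≤ y / x - 1 := by
      have : 0 ≤ y / x := div_nonneg hy hx
      linarith
    have key := one_add_mul_self_le_rpow_one_add hs hp
    have h1 : (1 : ℝ) + (y / x - 1) = y / x := by ring
    rw [h1, Real.div_rpow hy hx] at key
    have hxp : (0 : ℝ) < x ^ p := Real.rpow_pos_of_pos h0 p
    have key2 : (1 + p * (y / x - 1)) * x ^ p ≤ y ^ p := (le_div_iff₀ hxp).mp key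
    have hx1 : x ^ (p - 1) * x = x ^ p := by
      rw [← Real.rpow_add_one (ne_of_gt h0)]; ring_nf
    have e : (1 + p * (y / x - 1)) * x ^ p = x ^ p - p * x ^ (p - 1) * (x - y) := by
      rw [← hx1]; field_simp; ring
    linarith [key2, e.symm.trans_le key2]

/-- For `p > 1` and `a, b ≥ 0`:
`|a^p - b^p| ≤ (p / √(p-1)) · √(a^p + b^p) · √((a^(p-1) - b^(p-1)) (a - b))`. -/
theorem stmt2 (p a b : ℝ) (hp : 1 < p) (ha : 0 ≤ a) (hb : 0 ≤ b) :
    |a ^ p - b ^ p| ≤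
      p / Real.sqrt (p - 1) * Real.sqrt (a ^ p + b ^ p) *
        Real.sqrt ((a ^ (p - 1) - b ^ (p - 1)) * (a - b)) := by
  wlog hab : b ≤ a with H
  · have := H p b a hp hb ha (le_of_not_ge hab)
    have e1 : |b ^ p - a ^ p| = |a ^ p - b ^ p| := abs_sub_comm _ _
    have e2 : (b ^ (p - 1) - a ^ (p - 1)) * (b - a)
        = (a ^ (p - 1) - b ^ (p - 1)) * (a - b) := by ring
    rw [e1, e2, add_comm (b ^ p)] at this
    exact this
  have hp1 : (0 : ℝ) < p - 1 := by linarith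
  have hp0 : (0 : ℝ) < p := by linarith
  have hq : (1 : ℝ) ≤ p / (p - 1) := by
    rw [le_div_iff₀ hp1]; linarith
  have hA : b ^ (p - 1) ≤ a ^ (p - 1) := Real.rpow_le_rpow hb hab hp1.le
  have hAnn : (0 : ℝ) ≤ b ^ (p - 1) := Real.rpow_nonneg hb _
  have hP : b ^ p ≤ a ^ p := Real.rpow_le_rpow hb hab hp0.le
  have hbp : (0 : ℝ) ≤ b ^ p := Real.rpow_nonneg hb _
  have hap : (0 : ℝ) ≤ a ^ p := Real.rpow_nonneg ha _
  have h1 : a ^ p - b ^ p ≤ p * a ^ (p - 1) * (a - b) :=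
    aux_rpow_sub_rpow_le p hp.le hb hab
  have h2 : a ^ p - b ^ p ≤ p / (p - 1) * a * (a ^ (p - 1) - b ^ (p - 1)) := by
    have key := aux_rpow_sub_rpow_le (p / (p - 1)) hq hAnn hA
    have hpq : (p - 1) * (p / (p - 1)) = p := by field_simp
    have hpq1 : (p - 1) * (p / (p - 1) - 1) = 1 := by field_simp; ring
    have ea : (a ^ (p - 1)) ^ (p / (p - 1)) = a ^ p := by
      rw [← Real.rpow_mul ha, hpq]
    have eb : (b ^ (p - 1)) ^ (p / (p - 1)) = b ^ p := by
      rw [← Real.rpow_mul hb, hpq]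
    have ea1 : (a ^ (p - 1)) ^ (p / (p - 1) - 1) = a := by
      rw [← Real.rpow_mul ha, hpq1, Real.rpow_one]
    rw [ea, eb, ea1] at key
    linarith [key]
  -- product of the two bounds
  set L := a ^ p - b ^ p with hL
  have hLnn : 0 ≤ L := by linarith
  have hprod : L ^ 2 ≤ p ^ 2 / (p - 1) * (a ^ p + b ^ p) *
      ((a ^ (p - 1) - b ^ (p - 1)) * (a - b)) := by
    have hax : a ^ (p - 1) * a = a ^ p := by
      rcases eq_or_lt_of_le ha with h0 | h0
      · rw [← h0]
        simp [Real.zero_rpow (by linarith : p ≠ 0),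
          Real.zero_rpow (by linarith : p - 1 ≠ 0)]
      · rw [← Real.rpow_add_one (ne_of_gt h0)]; ring_nf
    have hr1 : 0 ≤ p * a ^ (p - 1) * (a - b) := by
      have := Real.rpow_nonneg ha (p - 1)
      have : 0 ≤ a - b := by linarith
      positivity
    have := mul_le_mul h1 h2 hLnn hr1
    have hexp : p * a ^ (p - 1) * (a - b) * (p / (p - 1) * a * (a ^ (p - 1) - b ^ (p - 1)))
        = p ^ 2 / (p - 1) * (a ^ (p - 1) * a) * ((a ^ (p - 1) - b ^ (p - 1)) * (a - b)) := by
      field_simp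
    rw [hexp, hax] at this
    have hmono : p ^ 2 / (p - 1) * a ^ p * ((a ^ (p - 1) - b ^ (p - 1)) * (a - b))
        ≤ p ^ 2 / (p - 1) * (a ^ p + b ^ p) * ((a ^ (p - 1) - b ^ (p - 1)) * (a - b)) := by
      have hfac : 0 ≤ (a ^ (p - 1) - b ^ (p - 1)) * (a - b) :=
        mul_nonneg (by linarith) (by linarith)
      have hc : 0 ≤ p ^ 2 / (p - 1) := by positivity
      exact mul_le_mul_of_nonneg_right
        (mul_le_mul_of_nonneg_left (le_add_of_nonneg_right hbp) hc) hfac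
    calc L ^ 2 = L * L := sq L
      _ ≤ p ^ 2 / (p - 1) * a ^ p * ((a ^ (p - 1) - b ^ (p - 1)) * (a - b)) := this
      _ ≤ _ := hmono
  -- now compare squares
  set R := p / Real.sqrt (p - 1) * Real.sqrt (a ^ p + b ^ p) *
      Real.sqrt ((a ^ (p - 1) - b ^ (p - 1)) * (a - b)) with hR
  have hRnn : 0 ≤ R := by positivity
  have hfac : 0 ≤ (a ^ (p - 1) - b ^ (p - 1)) * (a - b) :=
    mul_nonneg (by linarith) (by linarith)
  have hR2 : R ^ 2 = p ^ 2 / (p - 1) * (a ^ p + b ^ p) *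
      ((a ^ (p - 1) - b ^ (p - 1)) * (a - b)) := by
    rw [hR]
    rw [mul_pow, mul_pow, div_pow, Real.sq_sqrt hp1.le, Real.sq_sqrt (by linarith),
      Real.sq_sqrt hfac]
  have : L ^ 2 ≤ R ^ 2 := by rw [hR2]; exact hprod
  have habs : |a ^ p - b ^ p| = L := abs_of_nonneg hLnn
  rw [habs]
  exact (pow_le_pow_iff_left₀ hLnn hRnn (by norm_num)).mp this
end

section
/- Let d ≥ 2. Suppose that for each k ∈ ℤ₀^d we are given vectors a_{k,1}, …, a_{k,d−1} ∈ ℝ^d forming an orthonormal system with ⟨a_{k,i}, k⟩ = 0 for all i (i.e. an orthonormal basis of the hyperplane k^⊥ = { y ∈ ℝ^d : ⟨y,k⟩ = 0 }). Let θ : ℤ₀^d → ℝ satisfy ∑_{k∈ℤ₀^d} θ_k² < ∞ and θ_k = θ_l whenever |k| = |l|. Then for all v, w ∈ ℝ^d: (d/(d−1)) ∑_{k∈ℤ₀^d} ∑_{i=1}^{d−1} θ_k² ⟨a_{k,i}, v⟩ ⟨a_{k,i}, w⟩ = (d/(d−1)) ∑_{k∈ℤ₀^d} θ_k² ( ⟨v,w⟩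 − ⟨v,k⟩⟨w,k⟩/|k|² ) = (∑_{k∈ℤ₀^d} θ_k²) · ⟨v,w⟩. -/
open Finset Matrix

lemma pointwise_key {n : ℕ} (k : Fin (n+1) → ℤ) (hk : k ≠ 0)
    (a : Fin n → Fin (n+1) → ℝ)
    (horth : ∀ i j, (∑ m, a i m * a j m) = if i = j then (1:ℝ) else 0)
    (hperp : ∀ i, (∑ m, a i m * (k m : ℝ)) = 0)
    (v w : Fin (n+1) → ℝ) :
    ∑ i, (∑ m, a i m * v m) * (∑ m, a i m * w m)
      = (∑ m, v m * w m)
        - (∑ m, v m * (k m : ℝ)) * (∑ m, w m * (k m : ℝ)) / (∑ m, ((k m : ℝ))^2) := by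
  have hS : 0 < ∑ m, ((k m : ℝ))^2 := by
    obtain ⟨m0, hm0⟩ : ∃ m, k m ≠ 0 := by
      by_contra h; push_neg at h; exact hk (funext h)
    apply Finset.sum_pos' (fun m _ => sq_nonneg _)
    exact ⟨m0, Finset.mem_univ _, by positivity⟩
  set S : ℝ := ∑ m, ((k m : ℝ))^2 with hSdef
  set r : ℝ := Real.sqrt S with hrdef
  have hr2 : r * r = S := Real.mul_self_sqrt hS.le
  have hr0 : r ≠ 0 := by
    have : 0 < r := Real.sqrt_pos.mpr hS
    exact this.ne'
  set u : Fin (n+1) → ℝ := fun m => (k m : ℝ) / r with hudef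
  set B : Fin (n+1) → Fin (n+1) → ℝ := Fin.snoc a u with hBdef
  have hrow : ∀ j j', (∑ m, B j m * B j' m) = if j = j' then (1:ℝ) else 0 := by
    intro j j'
    induction j using Fin.lastCases with
    | last =>
      induction j' using Fin.lastCases with
      | last =>
        simp only [hBdef, Fin.snoc_last, if_pos rfl, hudef]
        rw [show (∑ m, (k m : ℝ)/r * ((k m : ℝ)/r)) = (∑ m, ((k m:ℝ))^2) / (r*r) by
          rw [Finset.sum_div]; exact Finset.sum_congr rfl (fun m _ => by ring)]
        rw [hr2]; exact div_self hS.ne'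
      | cast i =>
        simp only [hBdef, Fin.snoc_last, Fin.snoc_castSucc, hudef]
        rw [if_neg (by simp [Fin.ext_iff]; omega)]
        rw [show (∑ m, (k m : ℝ)/r * a i m) = (∑ m, a i m * (k m : ℝ)) / r by
          rw [Finset.sum_div]; exact Finset.sum_congr rfl (fun m _ => by ring)]
        rw [hperp i]; simp
    | cast i =>
      induction j' using Fin.lastCases with
      | last =>
        simp only [hBdef, Fin.snoc_last, Fin.snoc_castSucc, hudef]
        rw [if_neg (by simp [Fin.ext_iff]; omega)]
        rw [show (∑ m, a i m * ((k m : ℝ)/r)) = (∑ m, a i m * (k m : ℝ)) / r by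
          rw [Finset.sum_div]; exact Finset.sum_congr rfl (fun m _ => by ring)]
        rw [hperp i]; simp
      | cast i' =>
        simp only [hBdef, Fin.snoc_castSucc]
        rw [horth i i']
        congr 1
        simp [Fin.ext_iff]
  have hMMT : (Matrix.of B) * (Matrix.of B)ᵀ = 1 := by
    ext j j'
    simp only [Matrix.mul_apply, Matrix.transpose_apply, Matrix.of_apply, Matrix.one_apply]
    exact hrow j j'
  have hMTM : (Matrix.of B)ᵀ * (Matrix.of B) = 1 := by
    rw [mul_eq_one_comm]; exact hMMT
  have hcol : ∀ m m', (∑ j, B j m * B j m') = if m = m' then (1:ℝ) else 0 := by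
    intro m m'
    have := congrFun (congrFun hMTM m) m'
    simpa [Matrix.mul_apply, Matrix.transpose_apply, Matrix.one_apply] using this
  have hfull : (∑ j, (∑ m, B j m * v m) * (∑ m, B j m * w m)) = ∑ m, v m * w m := by
    have : ∀ j, (∑ m, B j m * v m) * (∑ m, B j m * w m)
        = ∑ m, ∑ m', v m * w m' * (B j m * B j m') := by
      intro j
      rw [Finset.sum_mul_sum]
      exact Finset.sum_congr rfl fun m _ => Finset.sum_congr rfl fun m' _ => by ring
    rw [Finset.sum_congr rfl (fun j _ => this j)]
    rw [Finset.sum_comm]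
    have : ∀ m, (∑ j, ∑ m', v m * w m' * (B j m * B j m'))
        = ∑ m', v m * w m' * (∑ j, B j m * B j m') := by
      intro m
      rw [Finset.sum_comm]
      exact Finset.sum_congr rfl fun m' _ => by rw [Finset.mul_sum]
    rw [Finset.sum_congr rfl (fun m _ => this m)]
    simp [hcol, mul_ite]
  rw [Fin.sum_univ_castSucc] at hfull
  simp only [hBdef, Fin.snoc_castSucc, Fin.snoc_last] at hfull
  have hu : (∑ m, u m * v m) * (∑ m, u m * w m)
      = (∑ m, v m * (k m : ℝ)) * (∑ m, w m * (k m : ℝ)) / S := by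
    simp only [hudef]
    rw [show (∑ m, (k m : ℝ)/r * v m) = (∑ m, v m * (k m : ℝ)) / r by
      rw [Finset.sum_div]; exact Finset.sum_congr rfl (fun m _ => by ring)]
    rw [show (∑ m, (k m : ℝ)/r * w m) = (∑ m, w m * (k m : ℝ)) / r by
      rw [Finset.sum_div]; exact Finset.sum_congr rfl (fun m _ => by ring)]
    rw [div_mul_div_comm, hr2]
  rw [hu] at hfull
  linarith


section Tlem
variable {d : ℕ}

local notation "I" => {k : Fin d → ℤ // k ≠ 0}

lemma sumsq_pos (k : I) : 0 < ∑ m', ((k.1 m' : ℝ))^2 := by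
  obtain ⟨m0, hm0⟩ : ∃ m, k.1 m ≠ 0 := by
    by_contra h; push_neg at h; exact k.2 (funext h)
  apply Finset.sum_pos' (fun m _ => sq_nonneg _)
  exact ⟨m0, Finset.mem_univ _, by positivity⟩

lemma abs_bound (k : I) (m n : Fin d) :
    |((k.1 m : ℝ) * (k.1 n)) / (∑ m', ((k.1 m' : ℝ))^2)| ≤ 1 := by
  have hS := sumsq_pos k
  rw [abs_div, abs_of_pos hS, div_le_one hS]
  have h1 : ((k.1 m : ℝ))^2 ≤ ∑ m', ((k.1 m' : ℝ))^2 :=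
    Finset.single_le_sum (f := fun m' => ((k.1 m' : ℝ))^2)
      (fun m' _ => sq_nonneg _) (Finset.mem_univ m)
  have h2 : ((k.1 n : ℝ))^2 ≤ ∑ m', ((k.1 m' : ℝ))^2 :=
    Finset.single_le_sum (f := fun m' => ((k.1 m' : ℝ))^2)
      (fun m' _ => sq_nonneg _) (Finset.mem_univ n)
  nlinarith [abs_nonneg ((k.1 m : ℝ) * (k.1 n)), sq_abs ((k.1 m : ℝ) * (k.1 n))]

lemma summable_T (θ : I → ℝ) (hsum : Summable fun k : I => θ k ^ 2) (m n : Fin d) :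
    Summable (fun k : I => θ k ^ 2 * ((k.1 m : ℝ) * (k.1 n) / (∑ m', ((k.1 m' : ℝ))^2))) := by
  apply Summable.of_norm_bounded hsum
  intro k
  rw [Real.norm_eq_abs, abs_mul, abs_of_nonneg (sq_nonneg (θ k))]
  calc θ k ^ 2 * |(k.1 m : ℝ) * (k.1 n) / (∑ m', ((k.1 m' : ℝ))^2)|
      ≤ θ k ^ 2 * 1 := mul_le_mul_of_nonneg_left (abs_bound k m n) (sq_nonneg _)
    _ = θ k ^ 2 := mul_one _

lemma tsum_T (θ : I → ℝ) (hsum : Summable fun k : I => θ k ^ 2)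
    (hsymm : ∀ k l : I, (∑ m, (k.1 m) ^ 2) = (∑ m, (l.1 m) ^ 2) → θ k = θ l)
    (m n : Fin d) :
    (∑' k : I, θ k ^ 2 * ((k.1 m : ℝ) * (k.1 n) / (∑ m', ((k.1 m' : ℝ))^2)))
      = if m = n then (∑' k : I, θ k ^ 2) / d else 0 := by
  have hdiag : ∀ m' n' : Fin d,
      (∑' k : I, θ k ^ 2 * ((k.1 m' : ℝ) * (k.1 m') / (∑ p, ((k.1 p : ℝ))^2)))
      = (∑' k : I, θ k ^ 2 * ((k.1 n' : ℝ) * (k.1 n') / (∑ p, ((k.1 p : ℝ))^2))) := by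
    intro m' n'
    have hswap : Function.Involutive
        (fun k : I => (⟨k.1 ∘ Equiv.swap m' n', by
          intro h
          apply k.2
          funext p
          have := congrFun h (Equiv.swap m' n' p)
          simpa [Equiv.swap_apply_self] using this⟩ : I)) := by
      intro k
      ext p
      simp [Equiv.swap_apply_self]
    set e := hswap.toPerm _ with hedef
    have he1 : ∀ k : I, (e k).1 = k.1 ∘ Equiv.swap m' n' := fun k => rfl
    have hθe : ∀ k : I, θ (e k) = θ k := by
      intro k
      apply hsymm
      rw [he1]
      exact Fintype.sum_equiv (Equiv.swap m' n') _ _ (fun p => rfl)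
    have hSe : ∀ k : I, (∑ p, (((e k).1 p : ℝ))^2) = ∑ p, ((k.1 p : ℝ))^2 := by
      intro k
      rw [he1]
      exact Fintype.sum_equiv (Equiv.swap m' n') _ _ (fun p => rfl)
    calc (∑' k : I, θ k ^ 2 * ((k.1 m' : ℝ) * (k.1 m') / (∑ p, ((k.1 p : ℝ))^2)))
        = ∑' k : I, θ (e k) ^ 2 * (((e k).1 m' : ℝ) * ((e k).1 m') / (∑ p, (((e k).1 p : ℝ))^2)) :=
          (e.tsum_eq _).symm
      _ = ∑' k : I, θ k ^ 2 * ((k.1 n' : ℝ) * (k.1 n') / (∑ p, ((k.1 p : ℝ))^2)) := by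
          apply tsum_congr
          intro k
          rw [hθe, hSe, he1]
          simp [Equiv.swap_apply_left]
  by_cases hmn : m = n
  · subst hmn
    rw [if_pos rfl]
    have hsum_diag : ∀ m' : Fin d, Summable
        (fun k : I => θ k ^ 2 * ((k.1 m' : ℝ) * (k.1 m') / (∑ p, ((k.1 p : ℝ))^2))) :=
      fun m' => summable_T θ hsum m' m'
    have htot : (∑ m' : Fin d, ∑' k : I,
        θ k ^ 2 * ((k.1 m' : ℝ) * (k.1 m') / (∑ p, ((k.1 p : ℝ))^2)))
        = ∑' k : I, θ k ^ 2 := by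
      rw [← Summable.tsum_finsetSum (fun m' _ => hsum_diag m')]
      apply tsum_congr
      intro k
      have hS := sumsq_pos k
      rw [← Finset.mul_sum, ← Finset.sum_div]
      rw [show (∑ m' : Fin d, (k.1 m' : ℝ) * (k.1 m')) = ∑ p, ((k.1 p : ℝ))^2 from
        Finset.sum_congr rfl fun p _ => (sq ((k.1 p : ℝ))).symm]
      rw [div_self hS.ne', mul_one]
    rw [Finset.sum_congr rfl (fun m' _ => hdiag m' m), Finset.sum_const,
      Finset.card_univ, Fintype.card_fin, nsmul_eq_mul] at htot
    have hd0 : 0 < d := Fin.pos m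
    have hd0' : (d : ℝ) ≠ 0 := by positivity
    rw [eq_div_iff hd0']
    linarith [htot]
  · rw [if_neg hmn]
    have hneg : Function.Involutive
        (fun k : I => (⟨Function.update k.1 m (-(k.1 m)), by
          intro h
          apply k.2
          funext p
          have := congrFun h p
          by_cases hp : p = m
          · subst hp
            simp only [Function.update_self, Pi.zero_apply, neg_eq_zero] at this
            simpa using this
          · simpa [Function.update_of_ne hp] using this⟩ : I)) := by
      intro k
      ext p
      by_cases hp : p = m
      · subst hp; simp
      · simp [Function.update_of_ne hp]
    set e := hneg.toPerm _ with hedef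
    have he1 : ∀ k : I, (e k).1 = Function.update k.1 m (-(k.1 m)) := fun k => rfl
    have hθe : ∀ k : I, θ (e k) = θ k := by
      intro k
      apply hsymm
      rw [he1]
      apply Finset.sum_congr rfl
      intro p _
      by_cases hp : p = m
      · subst hp; simp
      · simp [Function.update_of_ne hp]
    have hSe : ∀ k : I, (∑ p, (((e k).1 p : ℝ))^2) = ∑ p, ((k.1 p : ℝ))^2 := by
      intro k
      rw [he1]
      apply Finset.sum_congr rfl
      intro p _
      by_cases hp : p = m
      · subst hp; simp
      · simp [Function.update_of_ne hp]
    have key : (∑' k : I, θ k ^ 2 * ((k.1 m : ℝ) * (k.1 n) / (∑ p, ((k.1 p : ℝ))^2)))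
        = - ∑' k : I, θ k ^ 2 * ((k.1 m : ℝ) * (k.1 n) / (∑ p, ((k.1 p : ℝ))^2)) := by
      conv_lhs => rw [← e.tsum_eq (fun k : I =>
        θ k ^ 2 * ((k.1 m : ℝ) * (k.1 n) / (∑ p, ((k.1 p : ℝ))^2)))]
      rw [← tsum_neg]
      apply tsum_congr
      intro k
      rw [hθe, hSe, he1]
      rw [Function.update_self, Function.update_of_ne (Ne.symm hmn)]
      push_cast
      ring
    linarith [key]
end Tlem

/-- Lemma on the noise coefficients: given, for each `k ∈ ℤ₀^d`, an orthonormal system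
`a_{k,1}, …, a_{k,d-1}` of vectors orthogonal to `k` (an orthonormal basis of `k^⊥`), and a
square-summable radially symmetric family `θ`, one has for all `v, w ∈ ℝ^d`:
`(d/(d-1)) ∑_k ∑_i θ_k² ⟨a_{k,i},v⟩⟨a_{k,i},w⟩
  = (d/(d-1)) ∑_k θ_k² (⟨v,w⟩ - ⟨v,k⟩⟨w,k⟩/|k|²) = (∑_k θ_k²) ⟨v,w⟩`. -/
theorem stmt5 (d : ℕ) (hd : 2 ≤ d)
    (a : {k : Fin d → ℤ // k ≠ 0} → Fin (d - 1) → (Fin d → ℝ))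
    (ha_orth : ∀ k i j, (∑ m, a k i m * a k j m) = if i = j then (1 : ℝ) else 0)
    (ha_perp : ∀ k i, (∑ m, a k i m * (k.1 m : ℝ)) = 0)
    (θ : {k : Fin d → ℤ // k ≠ 0} → ℝ)
    (hsum : Summable fun k => θ k ^ 2)
    (hsymm : ∀ k l : {k : Fin d → ℤ // k ≠ 0},
      (∑ m, (k.1 m) ^ 2) = (∑ m, (l.1 m) ^ 2) → θ k = θ l)
    (v w : Fin d → ℝ) :
    ((d : ℝ) / ((d : ℝ) - 1)) *
        ∑' k : {k : Fin d → ℤ // k ≠ 0},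
          θ k ^ 2 * ∑ i, (∑ m, a k i m * v m) * (∑ m, a k i m * w m) =
      (∑' k : {k : Fin d → ℤ // k ≠ 0}, θ k ^ 2) * (∑ m, v m * w m)
    ∧ ((d : ℝ) / ((d : ℝ) - 1)) *
        ∑' k : {k : Fin d → ℤ // k ≠ 0},
          θ k ^ 2 * ((∑ m, v m * w m) -
            (∑ m, v m * (k.1 m : ℝ)) * (∑ m, w m * (k.1 m : ℝ)) /
              (∑ m, ((k.1 m : ℝ)) ^ 2)) =
      (∑' k : {k : Fin d → ℤ // k ≠ 0}, θ k ^ 2) * (∑ m, v m * w m) := by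
  obtain ⟨n, rfl⟩ : ∃ n, d = n + 1 := ⟨d - 1, by omega⟩
  set c : ℝ := ∑ m, v m * w m with hc
  set S : ℝ := ∑' k : {k : Fin (n+1) → ℤ // k ≠ 0}, θ k ^ 2 with hSdef
  -- pointwise identity reducing first sum to second
  have hpt : ∀ k : {k : Fin (n+1) → ℤ // k ≠ 0},
      (∑ i, (∑ m, a k i m * v m) * (∑ m, a k i m * w m))
      = c - (∑ m, v m * (k.1 m : ℝ)) * (∑ m, w m * (k.1 m : ℝ)) /
          (∑ m, ((k.1 m : ℝ))^2) := fun k =>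
    pointwise_key k.1 k.2 (a k) (ha_orth k) (ha_perp k) v w
  have hfirst_eq :
      (∑' k : {k : Fin (n+1) → ℤ // k ≠ 0},
        θ k ^ 2 * ∑ i, (∑ m, a k i m * v m) * (∑ m, a k i m * w m))
      = ∑' k : {k : Fin (n+1) → ℤ // k ≠ 0},
          θ k ^ 2 * (c - (∑ m, v m * (k.1 m : ℝ)) * (∑ m, w m * (k.1 m : ℝ)) /
            (∑ m, ((k.1 m : ℝ))^2)) :=
    tsum_congr fun k => by rw [hpt k]
  -- compute the second tsum
  have hg : ∀ m' n' : Fin (n+1), Summable (fun k : {k : Fin (n+1) → ℤ // k ≠ 0} =>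
      (v m' * w n') * (θ k ^ 2 * ((k.1 m' : ℝ) * (k.1 n') / (∑ p, ((k.1 p : ℝ))^2)))) :=
    fun m' n' => (summable_T θ hsum m' n').mul_left _
  have hinner : ∀ k : {k : Fin (n+1) → ℤ // k ≠ 0},
      θ k ^ 2 * (c - (∑ m, v m * (k.1 m : ℝ)) * (∑ m, w m * (k.1 m : ℝ)) /
        (∑ m, ((k.1 m : ℝ))^2))
      = c * θ k ^ 2 - ∑ m', ∑ n',
          (v m' * w n') * (θ k ^ 2 * ((k.1 m' : ℝ) * (k.1 n') / (∑ p, ((k.1 p : ℝ))^2))) := by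
    intro k
    rw [Finset.sum_mul_sum]
    rw [mul_sub]
    congr 1
    · ring
    · rw [Finset.sum_div, Finset.mul_sum]
      refine Finset.sum_congr rfl fun m' _ => ?_
      rw [Finset.sum_div, Finset.mul_sum]
      refine Finset.sum_congr rfl fun n' _ => ?_
      ring
  have hsum_inner : Summable (fun k : {k : Fin (n+1) → ℤ // k ≠ 0} =>
      ∑ m', ∑ n', (v m' * w n') *
        (θ k ^ 2 * ((k.1 m' : ℝ) * (k.1 n') / (∑ p, ((k.1 p : ℝ))^2)))) := by
    apply summable_sum
    intro m' _
    exact summable_sum (fun n' _ => hg m' n')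
  have hval : (∑' k : {k : Fin (n+1) → ℤ // k ≠ 0},
      θ k ^ 2 * (c - (∑ m, v m * (k.1 m : ℝ)) * (∑ m, w m * (k.1 m : ℝ)) /
        (∑ m, ((k.1 m : ℝ))^2)))
      = c * S - c * S / (n+1) := by
    rw [tsum_congr hinner, Summable.tsum_sub (hsum.mul_left c) hsum_inner]
    rw [tsum_mul_left]
    congr 1
    rw [Summable.tsum_finsetSum (fun m' _ => summable_sum (fun n' _ => hg m' n'))]
    have : ∀ m' : Fin (n+1), (∑' k : {k : Fin (n+1) → ℤ // k ≠ 0},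
        ∑ n', (v m' * w n') * (θ k ^ 2 * ((k.1 m' : ℝ) * (k.1 n') / (∑ p, ((k.1 p : ℝ))^2))))
        = ∑ n', (v m' * w n') * (if m' = n' then S / (n+1) else 0) := by
      intro m'
      rw [Summable.tsum_finsetSum (fun n' _ => hg m' n')]
      refine Finset.sum_congr rfl fun n' _ => ?_
      rw [tsum_mul_left, tsum_T θ hsum hsymm m' n']
      push_cast
      ring_nf
      rw [hSdef]; ring_nf
    rw [Finset.sum_congr rfl (fun m' _ => this m')]
    simp only [mul_ite, mul_zero, Finset.sum_ite_eq, Finset.mem_univ, if_true]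
    rw [hc, Finset.sum_mul, Finset.sum_div]
    exact Finset.sum_congr rfl fun m' _ => by ring
  have hd1 : ((n:ℝ) + 1) - 1 ≠ 0 := by
    have : 1 ≤ n := by omega
    have : (1:ℝ) ≤ (n:ℝ) := by exact_mod_cast this
    intro h; simp at h; linarith
  have hd0 : ((n:ℝ) + 1) ≠ 0 := by positivity
  have hn0 : (n:ℝ) ≠ 0 := by
    have : 1 ≤ n := by omega
    have : (1:ℝ) ≤ (n:ℝ) := by exact_mod_cast this
    linarith
  have key : (((n+1 : ℕ) : ℝ) / (((n+1 : ℕ) : ℝ) - 1)) * (c * S - c * S / (n+1)) = S * c := by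
    push_cast
    field_simp
  constructor
  · rw [hfirst_eq, hval]; exact key
  · rw [hval]; exact key
end

section
/- Let l = (a,b) ∈ ℤ² be nonzero and l^⊥ = (−b,a). Let z ∈ ℤ². (i) If ⟨z,l⟩ ≥ 0 and ⟨z,l^⊥⟩ ≥ 1, define Γ(n) = z + ⌊(n+1)/2⌋·l + ⌊n/2⌋·l^⊥ for n ∈ ℕ and Δ(n) = Γ(n+1) − Γ(n) (so Δ(n) = l when n is even and Δ(n) = l^⊥ when n is odd). Then for all n ∈ ℕ: |Γ(n)|²·|l|² − ⟨Γ(n), Δ(n)⟩² ≥ (n+1)²/4. (ii) The same conclusion holds if instead ⟨z,l⟩ ≥ 1 and ⟨z,l^⊥⟩ ≥ 0 and Γ(n) = z + ⌊n/2⌋·l + ⌊(n+1)/2⌋·l^⊥. -/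
/-!
Since `|Δ(n)| = |l|`, the quantity to bound is the cross product `⟨Γ(n), Δ(n)^⊥⟩²`. The steps
alternate between `l` and `l^⊥`, so `⟨Γ(n), Δ(n)^⊥⟩` is `⟨z, l^⊥⟩ + (n/2)|l|²` for even `n` and
`-(⟨z, l⟩ + ((n+1)/2)|l|²)` for odd `n`; as `|l|² ≥ 1` and the inner products of `z` are
nonnegative, the one paired with `n/2` even positive, both have absolute value at least
`(n+1)/2`. The second class of orbits is the mirror image of the first under `(x, y) ↦ (y, x)`.
-/

noncomputable section

/-- Euclidean inner product on `ℤ²` (integer valued). -/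
def ipz (k l : ℤ × ℤ) : ℤ := k.1 * l.1 + k.2 * l.2

/-- Squared Euclidean norm on `ℤ²` (integer valued). -/
def nsqz (k : ℤ × ℤ) : ℤ := k.1 ^ 2 + k.2 ^ 2

/-- Rotation by 90 degrees: for `l = (a,b)`, `perp l = (-b,a)`. -/
def perp (l : ℤ × ℤ) : ℤ × ℤ := (-l.2, l.1)

/-- First class of orbits: `Γ(n) = z + ⌊(n+1)/2⌋ l + ⌊n/2⌋ l^⊥`. -/
def orbit1 (z l : ℤ × ℤ) (n : ℕ) : ℤ × ℤ :=
  z + (((n + 1) / 2 : ℕ) : ℤ) • l + ((n / 2 : ℕ) : ℤ) • perp l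

/-- Second class of orbits: `Γ(n) = z + ⌊n/2⌋ l + ⌊(n+1)/2⌋ l^⊥`. -/
def orbit2 (z l : ℤ × ℤ) (n : ℕ) : ℤ × ℤ :=
  z + ((n / 2 : ℕ) : ℤ) • l + (((n + 1) / 2 : ℕ) : ℤ) • perp l

/-- `|l|² |Π_{Δ(n)}^⊥ Γ(n)|²` for `Δ(n) = Γ(n+1) - Γ(n)`, provided `|Δ(n)| = |l|`. -/
def orbitDefect (Γ : ℕ → ℤ × ℤ) (l : ℤ × ℤ) (n : ℕ) : ℤ :=
  nsqz (Γ n) * nsqz l - ipz (Γ n) (Γ (n + 1) - Γ n) ^ 2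

lemma one_le_nsqz {l : ℤ × ℤ} (hl : l ≠ 0) : 1 ≤ nsqz l := by
  obtain ⟨a, b⟩ := l
  have hab : a ≠ 0 ∨ b ≠ 0 := by
    by_contra! h
    exact hl (Prod.ext h.1 h.2)
  unfold nsqz
  rcases hab with h | h
  · nlinarith [Int.one_le_abs h, sq_abs a, sq_nonneg b]
  · nlinarith [Int.one_le_abs h, sq_abs b, sq_nonneg a]

lemma ipz_swap (u v : ℤ × ℤ) : ipz u.swap v.swap = ipz u v := by
  simp only [ipz, Prod.fst_swap, Prod.snd_swap]
  ring

lemma nsqz_swap (u : ℤ × ℤ) : nsqz u.swap = nsqz u := by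
  simp only [nsqz, Prod.fst_swap, Prod.snd_swap]
  ring

lemma nsqz_perp (u : ℤ × ℤ) : nsqz (perp u) = nsqz u := by
  simp only [nsqz, perp]
  ring

lemma perp_swap_perp (l : ℤ × ℤ) : perp (perp l).swap = l.swap :=
  Prod.ext (neg_neg _) rfl

lemma orbit2_eq_swap_orbit1 (z l : ℤ × ℤ) (n : ℕ) :
    orbit2 z l n = (orbit1 z.swap (perp l).swap n).swap := by
  simp only [orbit1, orbit2, perp_swap_perp, Prod.swap_add, Prod.smul_swap, Prod.swap_swap]
  abel

lemma orbitDefect_orbit2 (z l : ℤ × ℤ) (n : ℕ) :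
    orbitDefect (orbit2 z l) l n = orbitDefect (orbit1 z.swap (perp l).swap) (perp l).swap n := by
  simp only [orbitDefect, orbit2_eq_swap_orbit1, ← Prod.swap_sub, ipz_swap, nsqz_swap, nsqz_perp]

lemma orbitDefect_orbit1_two_mul (z l : ℤ × ℤ) (m : ℕ) :
    orbitDefect (orbit1 z l) l (2 * m) = (ipz z (perp l) + m * nsqz l) ^ 2 := by
  have h₁ : (2 * m + 1) / 2 = m := by omega
  have h₂ : 2 * m / 2 = m := by omega
  have h₃ : (2 * m + 1 + 1) / 2 = m + 1 := by omega
  simp only [orbitDefect, orbit1, h₁, h₂, h₃, ipz, nsqz, perp, Prod.fst_add, Prod.snd_add,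
    Prod.fst_sub, Prod.snd_sub, Prod.smul_fst, Prod.smul_snd, smul_eq_mul]
  push_cast
  ring

lemma orbitDefect_orbit1_two_mul_add_one (z l : ℤ × ℤ) (m : ℕ) :
    orbitDefect (orbit1 z l) l (2 * m + 1) = (ipz z l + (m + 1) * nsqz l) ^ 2 := by
  have h₁ : (2 * m + 1) / 2 = m := by omega
  have h₂ : (2 * m + 1 + 1) / 2 = m + 1 := by omega
  have h₃ : (2 * m + 1 + 1 + 1) / 2 = m + 1 := by omega
  simp only [orbitDefect, orbit1, h₁, h₂, h₃, ipz, nsqz, perp, Prod.fst_add, Prod.snd_add,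
    Prod.fst_sub, Prod.snd_sub, Prod.smul_fst, Prod.smul_snd, smul_eq_mul]
  push_cast
  ring

lemma succ_sq_div_four_le_sq {n : ℕ} {x : ℤ} (h : (n : ℤ) + 1 ≤ 2 * x) :
    ((n : ℝ) + 1) ^ 2 / 4 ≤ ((x ^ 2 : ℤ) : ℝ) := by
  have h' : (n : ℝ) + 1 ≤ 2 * x := by exact_mod_cast h
  push_cast
  nlinarith

lemma orbitDefect_orbit1_ge {z l : ℤ × ℤ} (hL : 1 ≤ nsqz l) (hz : 0 ≤ ipz z l)
    (hz' : 1 ≤ ipz z (perp l)) (n : ℕ) :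
    ((n : ℝ) + 1) ^ 2 / 4 ≤ (orbitDefect (orbit1 z l) l n : ℝ) := by
  obtain ⟨m, rfl | rfl⟩ := Nat.even_or_odd' n
  · rw [orbitDefect_orbit1_two_mul]
    apply succ_sq_div_four_le_sq
    push_cast
    nlinarith
  · rw [orbitDefect_orbit1_two_mul_add_one]
    apply succ_sq_div_four_le_sq
    push_cast
    nlinarith

/-- Orbit estimates in `ℤ²`: for nonzero `l` and the orbits alternating between the steps
`l` and `l^⊥`, one has `|Γ(n)|²|l|² - ⟨Γ(n), Δ(n)⟩² ≥ (n+1)²/4`, where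
`Δ(n) = Γ(n+1) - Γ(n)`, (i) when `⟨z,l⟩ ≥ 0` and `⟨z,l^⊥⟩ ≥ 1`, and
(ii) when `⟨z,l⟩ ≥ 1` and `⟨z,l^⊥⟩ ≥ 0` for the second class of orbits. -/
theorem stmt8 (z l : ℤ × ℤ) (hl : l ≠ 0) :
    (0 ≤ ipz z l → 1 ≤ ipz z (perp l) →
      ∀ n : ℕ,
        ((n : ℝ) + 1) ^ 2 / 4 ≤
          ((nsqz (orbit1 z l n) * nsqz l -
            ipz (orbit1 z l n) (orbit1 z l (n + 1) - orbit1 z l n) ^ 2 : ℤ) : ℝ)) ∧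
    (1 ≤ ipz z l → 0 ≤ ipz z (perp l) →
      ∀ n : ℕ,
        ((n : ℝ) + 1) ^ 2 / 4 ≤
          ((nsqz (orbit2 z l n) * nsqz l -
            ipz (orbit2 z l n) (orbit2 z l (n + 1) - orbit2 z l n) ^ 2 : ℤ) : ℝ)) := by
  have hL := one_le_nsqz hl
  refine ⟨orbitDefect_orbit1_ge hL, fun hz hz' n => ?_⟩
  have hL' : 1 ≤ nsqz (perp l).swap := by rwa [nsqz_swap, nsqz_perp]
  have := orbitDefect_orbit1_ge hL' (by rwa [ipz_swap]) (by rwa [perp_swap_perp, ipz_swap]) n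
  rwa [← orbitDefect_orbit2] at this

end
end

section
/- Let d ≥ 2 and let l₁, l₂ ∈ ℤ₀^d be linearly independent over ℝ with |l₁| = |l₂|. Let z ∈ ℤ^d satisfy ⟨z,l₂⟩·|l₁|² − ⟨z,l₁⟩·⟨l₁,l₂⟩ ≥ 1 and ⟨z,l₁⟩·|l₂|² − ⟨z,l₂⟩·⟨l₁,l₂⟩ ≥ 0. Define Γ(n) = z + ⌊(n+1)/2⌋·l₁ + ⌊n/2⌋·l₂ for n ∈ ℕ and Δ(n) = Γ(n+1) − Γ(n) (so Δ(n) = l₁ when n is even and Δ(n) = l₂ when n is odd). Then for all n ∈ ℕ: |Γ(n)|²·|Δ(n)|² − ⟨Γ(n), Δ(n)⟩² ≥ (n+1)²·|Δ(n)|²/(4|l₁|²); equivalently, |Π_{Δ(n)}^⊥ Γ(n)|² ≥ (n+1)²/(4|l₁|²). -/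
/-!
For a fixed `v`, `Q_v(x) = |x|²|v|² - ⟨x,v⟩²` is a nonnegative integer quadratic form that is
unchanged by adding multiples of `v` to `x`. For `n = 2m` the step is `l₁` and
`Q_{l₁}(Γ(n)) = Q_{l₁}(z + m l₂) = Q(z) + 2m B(z,l₂) + m² Q(l₂)`, where the polar value `B(z,l₂)`
is the first hypothesis, at least `1`. Cauchy–Schwarz `B(z,l₂)² ≤ Q(z) Q(l₂)` and integrality force
`Q(z), Q(l₂) ≥ 1`, so `Q_{l₁}(Γ(n)) ≥ (m+1)²`. For `n = 2m+1` the step is `l₂`, the second hypothesis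
is the polar value `B(z,l₁)` and `Q_{l₂}(l₁) = Q_{l₁}(l₂) ≥ 1`, giving `Q_{l₂}(Γ(n)) ≥ (m+1)²`.
Since `|Δ(n)| = |l₁|`, both cases reduce to `(n+1)²/4 ≤ (⌊n/2⌋+1)²`.
-/

noncomputable section

/-- Euclidean inner product on `ℤ^d` (integer valued). -/
def ipZ {d : ℕ} (k l : Fin d → ℤ) : ℤ := ∑ i, k i * l i

/-- Squared Euclidean norm on `ℤ^d` (integer valued). -/
def nsqZ {d : ℕ} (k : Fin d → ℤ) : ℤ := ∑ i, (k i) ^ 2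

/-- A lattice vector regarded as a vector of `ℝ^d`. -/
def toR {d : ℕ} (k : Fin d → ℤ) : Fin d → ℝ := fun i => (k i : ℝ)

/-- The orbit `Γ(n) = z + ⌊(n+1)/2⌋ l₁ + ⌊n/2⌋ l₂`. -/
def orbitA {d : ℕ} (z l₁ l₂ : Fin d → ℤ) (n : ℕ) : Fin d → ℤ :=
  z + (((n + 1) / 2 : ℕ) : ℤ) • l₁ + ((n / 2 : ℕ) : ℤ) • l₂

section Gram

variable {d : ℕ}

theorem ipZ_eq_dotProduct (x y : Fin d → ℤ) : ipZ x y = x ⬝ᵥ y := rfl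

theorem nsqZ_eq_dotProduct (x : Fin d → ℤ) : nsqZ x = x ⬝ᵥ x := by
  simp only [nsqZ, dotProduct, sq]

theorem nsqZ_eq_ipZ_self (x : Fin d → ℤ) : nsqZ x = ipZ x x := nsqZ_eq_dotProduct x

theorem ipZ_comm (x y : Fin d → ℤ) : ipZ x y = ipZ y x := dotProduct_comm x y

theorem one_le_nsqZ {v : Fin d → ℤ} (hv : v ≠ 0) : 1 ≤ nsqZ v := by
  rw [nsqZ_eq_dotProduct]
  exact lt_of_le_of_ne (Fintype.sum_nonneg fun i => mul_self_nonneg (v i))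
    (Ne.symm (dotProduct_self_eq_zero.not.mpr hv))

theorem ipZ_sq_le (x y : Fin d → ℤ) : ipZ x y ^ 2 ≤ nsqZ x * nsqZ y := by
  simpa [ipZ, nsqZ] using Finset.sum_mul_sq_le_sq_mul_sq Finset.univ x y

/-- `gramZ v x = |v|² |Π_v^⊥ x|²`, a quadratic form in `x`. -/
def gramZ (v x : Fin d → ℤ) : ℤ := nsqZ x * nsqZ v - ipZ x v ^ 2

def gramPolarZ (v x y : Fin d → ℤ) : ℤ := nsqZ v * ipZ x y - ipZ x v * ipZ y v

theorem gramZ_comm (v x : Fin d → ℤ) : gramZ v x = gramZ x v := by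
  rw [gramZ, gramZ, ipZ_comm, mul_comm]

theorem gramZ_nonneg (v x : Fin d → ℤ) : 0 ≤ gramZ v x := sub_nonneg.mpr (ipZ_sq_le x v)

theorem gramPolarZ_self (v x : Fin d → ℤ) : gramPolarZ v x x = gramZ v x := by
  simp only [gramPolarZ, gramZ, nsqZ_eq_dotProduct, ipZ_eq_dotProduct]; ring

theorem gramZ_add_smul (v x y : Fin d → ℤ) (t : ℤ) :
    gramZ v (x + t • y) = gramZ v x + 2 * t * gramPolarZ v x y + t ^ 2 * gramZ v y := by
  simp only [gramZ, gramPolarZ, nsqZ_eq_dotProduct, ipZ_eq_dotProduct, add_dotProduct,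
    dotProduct_add, smul_dotProduct, dotProduct_smul, smul_eq_mul, dotProduct_comm y x]
  ring

theorem gramZ_add_smul_self (v x : Fin d → ℤ) (t : ℤ) : gramZ v (x + t • v) = gramZ v x := by
  rw [gramZ_add_smul]
  simp only [gramPolarZ, gramZ, nsqZ_eq_dotProduct, ipZ_eq_dotProduct]
  ring

theorem ipZ_smul_sub_smul (v x y : Fin d → ℤ) :
    ipZ (nsqZ v • x - ipZ x v • v) (nsqZ v • y - ipZ y v • v) = nsqZ v * gramPolarZ v x y := by
  simp only [gramPolarZ, nsqZ_eq_dotProduct, ipZ_eq_dotProduct, sub_dotProduct,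
    dotProduct_sub, smul_dotProduct, dotProduct_smul, smul_eq_mul, dotProduct_comm v y]
  ring

/-- Cauchy–Schwarz for `|v|² x - ⟨x,v⟩ v` and `|v|² y - ⟨y,v⟩ v`, the components orthogonal to `v`
scaled so as to stay in `ℤ^d`. -/
theorem gramPolarZ_sq_le {v : Fin d → ℤ} (hv : v ≠ 0) (x y : Fin d → ℤ) :
    gramPolarZ v x y ^ 2 ≤ gramZ v x * gramZ v y := by
  have hN : 0 < nsqZ v := one_le_nsqZ hv
  have hproj (w : Fin d → ℤ) : nsqZ (nsqZ v • w - ipZ w v • v) = nsqZ v * gramZ v w := by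
    rw [nsqZ_eq_ipZ_self, ipZ_smul_sub_smul, gramPolarZ_self]
  have hcs := ipZ_sq_le (nsqZ v • x - ipZ x v • v) (nsqZ v • y - ipZ y v • v)
  rw [ipZ_smul_sub_smul, hproj, hproj] at hcs
  refine le_of_mul_le_mul_left ?_ (pow_pos hN 2)
  linarith

theorem one_le_gramZ_of_one_le_gramPolarZ {v x y : Fin d → ℤ} (hv : v ≠ 0)
    (h : 1 ≤ gramPolarZ v x y) : 1 ≤ gramZ v x ∧ 1 ≤ gramZ v y := by
  have hprod : 0 < gramZ v x * gramZ v y :=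
    (one_le_pow₀ h).trans_lt' one_pos |>.trans_le (gramPolarZ_sq_le hv x y)
  exact ⟨pos_of_mul_pos_left hprod (gramZ_nonneg v y),
    pos_of_mul_pos_right hprod (gramZ_nonneg v x)⟩

theorem sq_le_gramZ_add_smul {v x y : Fin d → ℤ} {a t : ℤ} (ht : 0 ≤ t)
    (hx : a ^ 2 ≤ gramZ v x) (hxy : a ≤ gramPolarZ v x y) (hy : 1 ≤ gramZ v y) :
    (a + t) ^ 2 ≤ gramZ v (x + t • y) := by
  rw [gramZ_add_smul]
  nlinarith [mul_le_mul_of_nonneg_left hxy ht, mul_le_mul_of_nonneg_left hy (sq_nonneg t)]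

end Gram

section Orbit

variable {d : ℕ} (z l₁ l₂ : Fin d → ℤ)

theorem orbitA_two_mul (m : ℕ) :
    orbitA z l₁ l₂ (2 * m) = z + (m : ℤ) • l₂ + (m : ℤ) • l₁ := by
  rw [orbitA, show (2 * m + 1) / 2 = m by omega, show 2 * m / 2 = m by omega, add_right_comm]

theorem orbitA_two_mul_add_one (m : ℕ) :
    orbitA z l₁ l₂ (2 * m + 1) = z + ((m : ℤ) + 1) • l₁ + (m : ℤ) • l₂ := by
  rw [orbitA, show (2 * m + 1 + 1) / 2 = m + 1 by omega, show (2 * m + 1) / 2 = m by omega]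
  push_cast
  rfl

theorem orbitA_two_mul_succ_sub (m : ℕ) :
    orbitA z l₁ l₂ (2 * m + 1) - orbitA z l₁ l₂ (2 * m) = l₁ := by
  rw [orbitA_two_mul_add_one, orbitA_two_mul]
  module

theorem orbitA_two_mul_add_one_succ_sub (m : ℕ) :
    orbitA z l₁ l₂ (2 * m + 1 + 1) - orbitA z l₁ l₂ (2 * m + 1) = l₂ := by
  rw [show 2 * m + 1 + 1 = 2 * (m + 1) by ring, orbitA_two_mul, orbitA_two_mul_add_one]
  push_cast
  module

theorem nsqZ_orbitA_succ_sub (hnorm : nsqZ l₁ = nsqZ l₂) (n : ℕ) :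
    nsqZ (orbitA z l₁ l₂ (n + 1) - orbitA z l₁ l₂ n) = nsqZ l₁ := by
  obtain ⟨m, rfl | rfl⟩ := Nat.even_or_odd' n
  · rw [orbitA_two_mul_succ_sub]
  · rw [orbitA_two_mul_add_one_succ_sub, hnorm]

theorem sq_le_gramZ_orbitA (hl₁ : l₁ ≠ 0)
    (h1 : 1 ≤ ipZ z l₂ * nsqZ l₁ - ipZ z l₁ * ipZ l₁ l₂)
    (h2 : 0 ≤ ipZ z l₁ * nsqZ l₂ - ipZ z l₂ * ipZ l₁ l₂) (n : ℕ) :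
    (((n / 2 : ℕ) : ℤ) + 1) ^ 2 ≤
      gramZ (orbitA z l₁ l₂ (n + 1) - orbitA z l₁ l₂ n) (orbitA z l₁ l₂ n) := by
  have hpolar₁ : 1 ≤ gramPolarZ l₁ z l₂ := by
    rw [gramPolarZ, ipZ_comm l₂]; linarith
  obtain ⟨hz, hl⟩ := one_le_gramZ_of_one_le_gramPolarZ hl₁ hpolar₁
  obtain ⟨m, rfl | rfl⟩ := Nat.even_or_odd' n
  · rw [orbitA_two_mul_succ_sub, orbitA_two_mul, gramZ_add_smul_self,
      show 2 * m / 2 = m by omega, add_comm _ (1 : ℤ)]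
    exact sq_le_gramZ_add_smul (Int.natCast_nonneg m) (by rwa [one_pow]) hpolar₁ hl
  · have hpolar₂ : 0 ≤ gramPolarZ l₂ z l₁ := by
      rw [gramPolarZ]; linarith
    have hgrowth := sq_le_gramZ_add_smul (a := 0) (t := (m : ℤ) + 1) (by positivity)
      (by rw [zero_pow two_ne_zero]; exact gramZ_nonneg l₂ z) hpolar₂ (by rwa [gramZ_comm])
    rw [orbitA_two_mul_add_one_succ_sub, orbitA_two_mul_add_one, gramZ_add_smul_self,
      show (2 * m + 1) / 2 = m by omega]
    rwa [zero_add] at hgrowth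

end Orbit

theorem stmt13_general (d : ℕ) (l₁ l₂ z : Fin d → ℤ)
    (hl₁ : l₁ ≠ 0) (hnorm : nsqZ l₁ = nsqZ l₂)
    (h1 : 1 ≤ ipZ z l₂ * nsqZ l₁ - ipZ z l₁ * ipZ l₁ l₂)
    (h2 : 0 ≤ ipZ z l₁ * nsqZ l₂ - ipZ z l₂ * ipZ l₁ l₂) (n : ℕ) :
    ((n : ℝ) + 1) ^ 2 * ((nsqZ (orbitA z l₁ l₂ (n + 1) - orbitA z l₁ l₂ n) : ℤ) : ℝ) /
        (4 * ((nsqZ l₁ : ℤ) : ℝ)) ≤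
      ((nsqZ (orbitA z l₁ l₂ n) * nsqZ (orbitA z l₁ l₂ (n + 1) - orbitA z l₁ l₂ n) -
          ipZ (orbitA z l₁ l₂ n) (orbitA z l₁ l₂ (n + 1) - orbitA z l₁ l₂ n) ^ 2 : ℤ) : ℝ) := by
  have hN : (0 : ℝ) < nsqZ l₁ := by exact_mod_cast one_le_nsqZ hl₁
  have hgram := sq_le_gramZ_orbitA z l₁ l₂ hl₁ h1 h2 n
  have hfloor : (n : ℤ) + 1 ≤ 2 * (((n / 2 : ℕ) : ℤ) + 1) := by omega
  have hint : ((n : ℤ) + 1) ^ 2 ≤ 4 * gramZ (orbitA z l₁ l₂ (n + 1) - orbitA z l₁ l₂ n)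
      (orbitA z l₁ l₂ n) := by
    nlinarith [pow_le_pow_left₀ (by positivity) hfloor 2]
  calc ((n : ℝ) + 1) ^ 2 * ((nsqZ (orbitA z l₁ l₂ (n + 1) - orbitA z l₁ l₂ n) : ℤ) : ℝ) /
        (4 * ((nsqZ l₁ : ℤ) : ℝ))
      = ((n : ℝ) + 1) ^ 2 / 4 := by
        rw [nsqZ_orbitA_succ_sub z l₁ l₂ hnorm n]; field_simp
    _ ≤ _ := by
        rw [div_le_iff₀ four_pos, mul_comm]
        exact_mod_cast hint

/-- Orbit estimate in `ℤ^d`, `d ≥ 2`: if `l₁, l₂ ∈ ℤ₀^d` are linearly independent over `ℝ`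
with `|l₁| = |l₂|`, and `z ∈ ℤ^d` satisfies `⟨z,l₂⟩|l₁|² - ⟨z,l₁⟩⟨l₁,l₂⟩ ≥ 1` and
`⟨z,l₁⟩|l₂|² - ⟨z,l₂⟩⟨l₁,l₂⟩ ≥ 0`, then along the orbit `Γ(n) = z + ⌊(n+1)/2⌋ l₁ + ⌊n/2⌋ l₂`
with steps `Δ(n) = Γ(n+1) - Γ(n)` one has
`|Γ(n)|²|Δ(n)|² - ⟨Γ(n),Δ(n)⟩² ≥ (n+1)² |Δ(n)|² / (4 |l₁|²)`. -/
theorem stmt13 (d : ℕ) (hd : 2 ≤ d) (l₁ l₂ z : Fin d → ℤ)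
    (hl₁ : l₁ ≠ 0) (hl₂ : l₂ ≠ 0)
    (hind : LinearIndependent ℝ ![toR l₁, toR l₂]) (hnorm : nsqZ l₁ = nsqZ l₂)
    (h1 : 1 ≤ ipZ z l₂ * nsqZ l₁ - ipZ z l₁ * ipZ l₁ l₂)
    (h2 : 0 ≤ ipZ z l₁ * nsqZ l₂ - ipZ z l₂ * ipZ l₁ l₂) (n : ℕ) :
    ((n : ℝ) + 1) ^ 2 * ((nsqZ (orbitA z l₁ l₂ (n + 1) - orbitA z l₁ l₂ n) : ℤ) : ℝ) /
        (4 * ((nsqZ l₁ : ℤ) : ℝ)) ≤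
      ((nsqZ (orbitA z l₁ l₂ n) * nsqZ (orbitA z l₁ l₂ (n + 1) - orbitA z l₁ l₂ n) -
          ipZ (orbitA z l₁ l₂ n) (orbitA z l₁ l₂ (n + 1) - orbitA z l₁ l₂ n) ^ 2 : ℤ) : ℝ) :=
  stmt13_general d l₁ l₂ z hl₁ hnorm h1 h2 n
end
end

section
/- Let d ≥ 1, p ≥ 1, let θ : ℤ₀^d → ℝ be finitely supported and symmetric (θ_k = θ_l whenever |k| = |l|), and let Y : ℤ^d → [0,∞) satisfy Y(0) = 0 and ∑_{k∈ℤ^d} (1 + |k|²) Y_k < ∞. Then ∑_{k∈ℤ^d} ∑_{l∈ℤ₀^d} θ_l² |Π_l^⊥ k|² (Y_{k−l} − Y_k) Y_k^{p−1} = −(1/2) ∑_{l∈ℤ₀^d} ∑_{k∈ℤ^d} θ_l² |Π_l^⊥ k|² (Y_{k+l} − Y_k)(Y_{k+l}^{p−1} − Y_k^{p−1}), all series being absolutely convergent. -/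
/-!
Fix `l` and put `h = Y^{p-1}`, which is bounded because `Y` is summable. The shift `k ↦ k + l`,
which preserves `|Π_l^⊥ k|²`, and the reflection `l ↦ -l` split the Dirichlet pairing
`∑_k |Π_l^⊥ k|² (Y_{k+l} - Y_k)(h_{k+l} - h_k)` into minus the sum of the two drift pairings
`∑_k |Π_l^⊥ k|² (Y_{k∓l} - Y_k) h_k`; summing against `θ_l² = θ_{-l}²` gives twice the drift term.
The weight `(1 + |k|²)` makes every series in `k` absolutely summable, and the finite support
of `θ` lets the sums over `k` and `l` be exchanged.
-/

noncomputable section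

open Function

section InfiniteSums

variable {α β γ : Type*}

theorem tsum_comm_of_finite_left [AddCommMonoid α] [TopologicalSpace α] [ContinuousAdd α]
    [T2Space α] {f : β → γ → α} (s : Finset β) (hs : ∀ b ∉ s, ∀ c, f b c = 0)
    (hf : ∀ b, Summable (f b)) :
    ∑' c, ∑' b, f b c = ∑' b, ∑' c, f b c := by
  have hs' : ∀ b ∉ s, ∑' c, f b c = 0 := fun b hb => by simp [hs b hb]
  rw [tsum_eq_sum hs', ← Summable.tsum_finsetSum fun b _ => hf b]
  exact tsum_congr fun c => tsum_eq_sum fun b hb => hs b hb c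

theorem tsum_mul_add_comp_equiv [Semiring α] [TopologicalSpace α] [ContinuousAdd α] [T2Space α]
    (e : β ≃ β) {w A : β → α} (hw : w.HasFiniteSupport) (he : ∀ b, w (e b) = w b) :
    ∑' b, w b * (A b + A (e b)) = 2 * ∑' b, w b * A b := by
  have hsum : ∀ A : β → α, Summable fun b => w b * A b := fun A =>
    summable_of_hasFiniteSupport (hw.subset (support_mul_subset_left _ _))
  have hcomp : ∑' b, w b * A (e b) = ∑' b, w b * A b := by
    simpa only [he] using e.tsum_eq fun b => w b * A b
  simp only [mul_add]
  rw [(hsum A).tsum_add (hsum fun b => A (e b)), hcomp, two_mul]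

theorem abs_rpow_le_tsum_rpow {Y : β → ℝ} (hY : ∀ k, 0 ≤ Y k) (hs : Summable Y) {r : ℝ}
    (hr : 0 ≤ r) (k : β) : |Y k ^ r| ≤ (∑' j, Y j) ^ r := by
  rw [abs_of_nonneg (Real.rpow_nonneg (hY k) r)]
  exact Real.rpow_le_rpow (hY k) (hs.le_tsum k fun j _ => hY j) hr

end InfiniteSums

section Lattice

variable {d : ℕ}

theorem nsqZ_nonneg (k : Fin d → ℤ) : 0 ≤ nsqZ k :=
  Finset.sum_nonneg fun _ _ => sq_nonneg _

@[simp]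
theorem nsqZ_neg (k : Fin d → ℤ) : nsqZ (-k) = nsqZ k := by
  simp [nsqZ]

@[simp]
theorem ipZ_neg_right (k l : Fin d → ℤ) : ipZ k (-l) = -ipZ k l := by
  simp [ipZ]

theorem nsqZ_add (k l : Fin d → ℤ) : nsqZ (k + l) = nsqZ k + 2 * ipZ k l + nsqZ l := by
  simp only [nsqZ, ipZ, Finset.mul_sum, ← Finset.sum_add_distrib, Pi.add_apply]
  exact Finset.sum_congr rfl fun i _ => by ring

theorem ipZ_add_left_self (k l : Fin d → ℤ) : ipZ (k + l) l = ipZ k l + nsqZ l := by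
  simp only [nsqZ, ipZ, ← Finset.sum_add_distrib, Pi.add_apply]
  exact Finset.sum_congr rfl fun i _ => by ring

theorem nsqZ_add_le (k l : Fin d → ℤ) : nsqZ (k + l) ≤ 2 * nsqZ k + 2 * nsqZ l := by
  nlinarith [nsqZ_add k l, nsqZ_add k (-l), nsqZ_nonneg (k + -l), ipZ_neg_right k l,
    nsqZ_neg l]

theorem ipZ_sq_le_nsqZ_mul (k l : Fin d → ℤ) : ipZ k l ^ 2 ≤ nsqZ k * nsqZ l := by
  simpa [ipZ, nsqZ] using Finset.sum_mul_sq_le_sq_mul_sq Finset.univ k l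

/-- `|Π_l^⊥ k|²`; for `l = 0` the division by zero makes it `|k|²`. -/
def perpSq (k l : Fin d → ℤ) : ℝ := nsqZ k - (ipZ k l : ℝ) ^ 2 / nsqZ l

theorem perpSq_nonneg (k l : Fin d → ℤ) : 0 ≤ perpSq k l := by
  refine sub_nonneg.mpr (div_le_of_le_mul₀ ?_ ?_ ?_) <;> norm_cast
  exacts [nsqZ_nonneg l, nsqZ_nonneg k, ipZ_sq_le_nsqZ_mul k l]

theorem perpSq_le_nsqZ (k l : Fin d → ℤ) : perpSq k l ≤ nsqZ k :=
  sub_le_self _ (div_nonneg (sq_nonneg _) (mod_cast nsqZ_nonneg l))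

theorem perpSq_add_self (k l : Fin d → ℤ) : perpSq (k + l) l = perpSq k l := by
  rcases eq_or_ne l 0 with rfl | hl
  · rw [add_zero]
  have hl' : (nsqZ l : ℝ) ≠ 0 := by
    refine mod_cast fun h => hl ?_
    funext i
    simpa using (Finset.sum_eq_zero_iff_of_nonneg fun i _ => sq_nonneg (l i)).mp h i
  simp only [perpSq, nsqZ_add, ipZ_add_left_self]
  push_cast
  field_simp
  ring

theorem perpSq_sub_self (k l : Fin d → ℤ) : perpSq (k - l) l = perpSq k l := by
  rw [← perpSq_add_self, sub_add_cancel]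

@[simp]
theorem perpSq_neg_right (k l : Fin d → ℤ) : perpSq k (-l) = perpSq k l := by
  simp [perpSq]

end Lattice

section Pairings

variable {d : ℕ} {Y : (Fin d → ℤ) → ℝ}

theorem summable_one_add_nsqZ_mul_comp_add (hY : ∀ k, 0 ≤ Y k)
    (hsum : Summable fun k => (1 + (nsqZ k : ℝ)) * Y k) (a : Fin d → ℤ) :
    Summable fun k => (1 + (nsqZ k : ℝ)) * Y (k + a) := by
  have hn (k : Fin d → ℤ) : (0 : ℝ) ≤ nsqZ k := mod_cast nsqZ_nonneg k
  have hshift := (Equiv.addRight a).summable_iff.mpr hsum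
  refine (hshift.mul_left (2 * (1 + (nsqZ a : ℝ)))).of_nonneg_of_le
    (fun k => mul_nonneg (by linarith [hn k]) (hY _)) fun k => ?_
  have hk : (nsqZ k : ℝ) ≤ 2 * nsqZ (k + a) + 2 * nsqZ a := by
    simpa using (Int.cast_le (R := ℝ)).mpr (nsqZ_add_le (k + a) (-a))
  have := hn a
  have := hn (k + a)
  show _ ≤ 2 * (1 + (nsqZ a : ℝ)) * ((1 + nsqZ (k + a)) * Y (k + a))
  rw [← mul_assoc]
  gcongr
  · exact hY _
  · nlinarith

theorem summable_perpSq_mul_sub_mul (hY : ∀ k, 0 ≤ Y k)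
    (hsum : Summable fun k => (1 + (nsqZ k : ℝ)) * Y k) (l a : Fin d → ℤ)
    {g : (Fin d → ℤ) → ℝ} {B : ℝ} (hg : ∀ k, |g k| ≤ B) :
    Summable fun k => perpSq k l * ((Y (k + a) - Y k) * g k) := by
  refine ((summable_one_add_nsqZ_mul_comp_add hY hsum a).add hsum).mul_left B
    |>.of_norm_bounded fun k => ?_
  have hc : |perpSq k l| ≤ 1 + nsqZ k := by
    rw [abs_of_nonneg (perpSq_nonneg k l)]
    linarith [perpSq_le_nsqZ k l]
  have hY' : |Y (k + a) - Y k| ≤ Y (k + a) + Y k := by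
    rw [abs_le]
    constructor <;> linarith [hY k, hY (k + a)]
  rw [Real.norm_eq_abs, abs_mul, abs_mul]
  calc |perpSq k l| * (|Y (k + a) - Y k| * |g k|)
      ≤ (1 + nsqZ k) * ((Y (k + a) + Y k) * B) := by
        gcongr
        exacts [(abs_nonneg _).trans hc, (abs_nonneg _).trans hY', hg k]
    _ = B * ((1 + nsqZ k) * Y (k + a) + (1 + nsqZ k) * Y k) := by ring

def driftPairing (Y h : (Fin d → ℤ) → ℝ) (l : Fin d → ℤ) : ℝ :=
  ∑' k, perpSq k l * ((Y (k - l) - Y k) * h k)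

def dirichletPairing (Y h : (Fin d → ℤ) → ℝ) (l : Fin d → ℤ) : ℝ :=
  ∑' k, perpSq k l * ((Y (k + l) - Y k) * (h (k + l) - h k))

theorem dirichletPairing_eq_neg_driftPairing_add (hY : ∀ k, 0 ≤ Y k)
    (hsum : Summable fun k => (1 + (nsqZ k : ℝ)) * Y k) {h : (Fin d → ℤ) → ℝ} {B : ℝ}
    (hh : ∀ k, |h k| ≤ B) (l : Fin d → ℤ) :
    dirichletPairing Y h l = -(driftPairing Y h l + driftPairing Y h (-l)) := by
  have hshifted : ∑' k, perpSq k l * ((Y (k + l) - Y k) * h (k + l)) = -driftPairing Y h l := by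
    rw [driftPairing, ← tsum_neg, ← (Equiv.subRight l).tsum_eq]
    refine tsum_congr fun k => ?_
    simp only [Equiv.subRight_apply, sub_add_cancel, perpSq_sub_self]
    ring
  have hreflected : ∑' k, perpSq k l * ((Y (k + l) - Y k) * h k) = driftPairing Y h (-l) := by
    simp only [driftPairing, perpSq_neg_right, sub_neg_eq_add]
  rw [dirichletPairing, neg_add, ← hshifted, ← hreflected, ← sub_eq_add_neg,
    ← Summable.tsum_sub (summable_perpSq_mul_sub_mul hY hsum l l fun k => hh (k + l))
      (summable_perpSq_mul_sub_mul hY hsum l l hh)]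
  exact tsum_congr fun k => by ring

end Pairings

theorem stmt15_general (d : ℕ) (p : ℝ) (hp : 1 ≤ p)
    (θ : {l : Fin d → ℤ // l ≠ 0} → ℝ) (hfin : (Function.support θ).Finite)
    (hsymm : ∀ k l : {l : Fin d → ℤ // l ≠ 0}, nsqZ k.1 = nsqZ l.1 → θ k = θ l)
    (Y : (Fin d → ℤ) → ℝ) (hY : ∀ k, 0 ≤ Y k)
    (hsum : Summable fun k : Fin d → ℤ => (1 + (nsqZ k : ℝ)) * Y k) :
    ∑' (k : Fin d → ℤ), ∑' (l : {l : Fin d → ℤ // l ≠ 0}),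
        θ l ^ 2 * ((nsqZ k : ℝ) - (ipZ k l.1 : ℝ) ^ 2 / (nsqZ l.1 : ℝ)) *
          ((Y (k - l.1) - Y k) * Y k ^ (p - 1)) =
      -(1 / 2) * ∑' (l : {l : Fin d → ℤ // l ≠ 0}), ∑' (k : Fin d → ℤ),
        θ l ^ 2 * ((nsqZ k : ℝ) - (ipZ k l.1 : ℝ) ^ 2 / (nsqZ l.1 : ℝ)) *
          ((Y (k + l.1) - Y k) * (Y (k + l.1) ^ (p - 1) - Y k ^ (p - 1))) := by
  have hYs : Summable Y := hsum.of_nonneg_of_le hY fun k =>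
    le_mul_of_one_le_left (hY k) (le_add_of_nonneg_right (mod_cast nsqZ_nonneg k))
  have hbdd := abs_rpow_le_tsum_rpow hY hYs (sub_nonneg.mpr hp)
  let ν : {l : Fin d → ℤ // l ≠ 0} ≃ {l : Fin d → ℤ // l ≠ 0} :=
    (Equiv.neg _).subtypeEquiv fun l => neg_ne_zero.symm
  have hθν : ∀ l, θ (ν l) ^ 2 = θ l ^ 2 := fun l => by rw [hsymm _ _ (nsqZ_neg l.1)]
  have hθ2 : HasFiniteSupport fun l => θ l ^ 2 := by
    simpa [HasFiniteSupport, support_pow] using hfin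
  have hswap := tsum_comm_of_finite_left hfin.toFinset
    (f := fun l k => θ l ^ 2 * perpSq k l.1 * ((Y (k - l.1) - Y k) * Y k ^ (p - 1)))
    (fun l hl k => by simp [show θ l = 0 by simpa using hl]) fun l =>
      ((summable_perpSq_mul_sub_mul hY hsum l.1 (-l.1) hbdd).mul_left (θ l ^ 2)).congr
        fun k => by rw [← sub_eq_add_neg, mul_assoc]
  have hsym : ∑' l : {l : Fin d → ℤ // l ≠ 0}, θ l ^ 2 *
      (driftPairing Y (Y · ^ (p - 1)) l.1 + driftPairing Y (Y · ^ (p - 1)) (-l.1)) =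
        2 * ∑' l : {l : Fin d → ℤ // l ≠ 0}, θ l ^ 2 * driftPairing Y (Y · ^ (p - 1)) l.1 :=
    tsum_mul_add_comp_equiv ν (A := fun l => driftPairing Y (Y · ^ (p - 1)) l.1) hθ2 hθν
  calc _ = ∑' l : {l : Fin d → ℤ // l ≠ 0}, θ l ^ 2 * driftPairing Y (Y · ^ (p - 1)) l.1 :=
        hswap.trans <| tsum_congr fun l => by
          rw [driftPairing, ← tsum_mul_left]
          simp only [mul_assoc]
    _ = -(1 / 2) * ∑' l : {l : Fin d → ℤ // l ≠ 0}, θ l ^ 2 *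
          -(driftPairing Y (Y · ^ (p - 1)) l.1 + driftPairing Y (Y · ^ (p - 1)) (-l.1)) := by
        simp only [mul_neg, tsum_neg, hsym]
        ring
    _ = _ := by
        congr 1
        refine tsum_congr fun l => ?_
        rw [← dirichletPairing_eq_neg_driftPairing_add hY hsum hbdd, dirichletPairing,
          ← tsum_mul_left]
        simp only [perpSq, mul_assoc]

/-- Symmetrization identity for the energy-spectrum drift: for `p ≥ 1`, a finitely supported
symmetric family `θ` on `ℤ₀^d`, and `Y : ℤ^d → [0,∞)` with `Y 0 = 0` and
`∑_k (1 + |k|²) Y_k < ∞`,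
`∑_{k∈ℤ^d} ∑_{l∈ℤ₀^d} θ_l² |Π_l^⊥ k|² (Y_{k-l} - Y_k) Y_k^{p-1}
  = -(1/2) ∑_{l∈ℤ₀^d} ∑_{k∈ℤ^d} θ_l² |Π_l^⊥ k|² (Y_{k+l} - Y_k)(Y_{k+l}^{p-1} - Y_k^{p-1})`. -/
theorem stmt15 (d : ℕ) (hd : 1 ≤ d) (p : ℝ) (hp : 1 ≤ p)
    (θ : {l : Fin d → ℤ // l ≠ 0} → ℝ) (hfin : (Function.support θ).Finite)
    (hsymm : ∀ k l : {l : Fin d → ℤ // l ≠ 0}, nsqZ k.1 = nsqZ l.1 → θ k = θ l)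
    (Y : (Fin d → ℤ) → ℝ) (hY : ∀ k, 0 ≤ Y k) (hY0 : Y 0 = 0)
    (hsum : Summable fun k : Fin d → ℤ => (1 + (nsqZ k : ℝ)) * Y k) :
    ∑' (k : Fin d → ℤ), ∑' (l : {l : Fin d → ℤ // l ≠ 0}),
        θ l ^ 2 * ((nsqZ k : ℝ) - (ipZ k l.1 : ℝ) ^ 2 / (nsqZ l.1 : ℝ)) *
          ((Y (k - l.1) - Y k) * Y k ^ (p - 1)) =
      -(1 / 2) * ∑' (l : {l : Fin d → ℤ // l ≠ 0}), ∑' (k : Fin d → ℤ),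
        θ l ^ 2 * ((nsqZ k : ℝ) - (ipZ k l.1 : ℝ) ^ 2 / (nsqZ l.1 : ℝ)) *
          ((Y (k + l.1) - Y k) * (Y (k + l.1) ^ (p - 1) - Y k ^ (p - 1))) :=
  stmt15_general d p hp θ hfin hsymm Y hY hsum
end
end

section
/- Let d ≥ 1 and let k, l ∈ ℝ^d with k ≠ 0, k + l ≠ 0 and k − l ≠ 0. Then 1/|k+l|² + 1/|k−l|² − 2/|k|² ≤ 8⟨k,l⟩² / (|k|²·|k+l|²·|k−l|²). -/
/-! With `A = |k|²`, `L = |l|²` and `t = ⟨k,l⟩` we have `|k ± l|² = A ± 2t + L`, and clearing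
denominators gives the exact identity
`1/(A+2t+L) + 1/(A-2t+L) - 2/A = (8t² - 2L(A+L)) / (A(A+2t+L)(A-2t+L))`.
The inequality follows by discarding the nonpositive term `-2L(A+L)`. -/

noncomputable section

/-- Euclidean inner product on `ℝ^d`. -/
def ipV {d : ℕ} (v w : Fin d → ℝ) : ℝ := ∑ i, v i * w i

/-- Squared Euclidean norm on `ℝ^d`. -/
def nsqV {d : ℕ} (v : Fin d → ℝ) : ℝ := ∑ i, (v i) ^ 2

lemma nsqV_nonneg {d : ℕ} (v : Fin d → ℝ) : 0 ≤ nsqV v :=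
  Finset.sum_nonneg fun i _ => sq_nonneg (v i)

lemma nsqV_eq_zero_iff {d : ℕ} {v : Fin d → ℝ} : nsqV v = 0 ↔ v = 0 := by
  simp only [nsqV, Finset.sum_eq_zero_iff_of_nonneg fun i _ => sq_nonneg (v i),
    Finset.mem_univ, true_implies, pow_eq_zero_iff two_ne_zero, funext_iff, Pi.zero_apply]

lemma nsqV_pos {d : ℕ} {v : Fin d → ℝ} (hv : v ≠ 0) : 0 < nsqV v :=
  (nsqV_nonneg v).lt_of_ne (Ne.symm (mt nsqV_eq_zero_iff.mp hv))

lemma nsqV_add {d : ℕ} (v w : Fin d → ℝ) :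
    nsqV (v + w) = nsqV v + 2 * ipV v w + nsqV w := by
  simp only [nsqV, ipV, Pi.add_apply, add_sq, Finset.sum_add_distrib, Finset.mul_sum, mul_assoc]

lemma nsqV_sub {d : ℕ} (v w : Fin d → ℝ) :
    nsqV (v - w) = nsqV v - 2 * ipV v w + nsqV w := by
  simp only [nsqV, ipV, Pi.sub_apply, sub_sq, Finset.sum_add_distrib, Finset.sum_sub_distrib,
    Finset.mul_sum, mul_assoc]

lemma one_div_add_one_div_sub_two_div_eq {A t L : ℝ} (hA : A ≠ 0) (hB : A + 2 * t + L ≠ 0)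
    (hC : A - 2 * t + L ≠ 0) :
    1 / (A + 2 * t + L) + 1 / (A - 2 * t + L) - 2 / A =
      (8 * t ^ 2 - 2 * L * (A + L)) / (A * (A + 2 * t + L) * (A - 2 * t + L)) := by
  field_simp
  ring

lemma one_div_add_one_div_sub_two_div_le {A t L : ℝ} (hA : 0 < A) (hL : 0 ≤ L)
    (hB : 0 < A + 2 * t + L) (hC : 0 < A - 2 * t + L) :
    1 / (A + 2 * t + L) + 1 / (A - 2 * t + L) - 2 / A ≤
      8 * t ^ 2 / (A * (A + 2 * t + L) * (A - 2 * t + L)) := by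
  rw [one_div_add_one_div_sub_two_div_eq hA.ne' hB.ne' hC.ne']
  gcongr
  have : 0 ≤ 2 * L * (A + L) := by positivity
  linarith

theorem stmt16_general (d : ℕ) (k l : Fin d → ℝ)
    (hk : k ≠ 0) (hkl : k + l ≠ 0) (hkl' : k - l ≠ 0) :
    1 / nsqV (k + l) + 1 / nsqV (k - l) - 2 / nsqV k ≤
      8 * ipV k l ^ 2 / (nsqV k * nsqV (k + l) * nsqV (k - l)) := by
  have hB := nsqV_pos hkl
  have hC := nsqV_pos hkl'
  rw [nsqV_add] at hB ⊢
  rw [nsqV_sub] at hC ⊢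
  exact one_div_add_one_div_sub_two_div_le (nsqV_pos hk) (nsqV_nonneg l) hB hC

/-- For `k, l ∈ ℝ^d` with `k ≠ 0`, `k + l ≠ 0`, `k - l ≠ 0`:
`1/|k+l|² + 1/|k-l|² - 2/|k|² ≤ 8⟨k,l⟩² / (|k|²|k+l|²|k-l|²)`. -/
theorem stmt16 (d : ℕ) (hd : 1 ≤ d) (k l : Fin d → ℝ)
    (hk : k ≠ 0) (hkl : k + l ≠ 0) (hkl' : k - l ≠ 0) :
    1 / nsqV (k + l) + 1 / nsqV (k - l) - 2 / nsqV k ≤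
      8 * ipV k l ^ 2 / (nsqV k * nsqV (k + l) * nsqV (k - l)) :=
  stmt16_general d k l hk hkl hkl'
end
end
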